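/- arXiv:1804.04964 — 9 statements merged into one kernel-verified Lean document; each statement's English description precedes it below -/
import Mathlib

section
/- The contraction of two injective MPS tensors is again injective. That is, if A₁ (with matrices A₁^i of size D₁×D₂) and A₂ (with matrices A₂^j of size D₂×D₃) are injective as maps from virtual to physical space, then the blocked tensor with matrices (A₁A₂)^{(i,j)} = A₁^i A₂^j is injective as a map from Mat(D₁×D₃) to ℂ^{d₁·d₂}. -/
open Matrix

/-- The contraction of two injective MPS tensors is injective. -/
theorem contraction_of_injective_is_injective (d₁ d₂ D₁ D₂ D₃ : ℕ) (hD₂ : 0 < D₂)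
    (A₁ : Fin d₁ → Matrix (Fin D₁) (Fin D₂) ℂ)
    (A₂ : Fin d₂ → Matrix (Fin D₂) (Fin D₃) ℂ)
    (h₁ : Function.Injective fun X : Matrix (Fin D₁) (Fin D₂) ℂ =>
      fun i : Fin d₁ => (A₁ i * Xᵀ).trace)
    (h₂ : Function.Injective fun X : Matrix (Fin D₂) (Fin D₃) ℂ =>
      fun j : Fin d₂ => (A₂ j * Xᵀ).trace) :
    Function.Injective fun X : Matrix (Fin D₁) (Fin D₃) ℂ =>
      fun p : Fin d₁ × Fin d₂ => (A₁ p.1 * A₂ p.2 * Xᵀ).trace := by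
  intro X Y hXY
  have h1 : ∀ i, (A₁ i)ᵀ * X = (A₁ i)ᵀ * Y := by
    intro i
    apply h₂
    funext j
    have hthis := congrFun hXY (i, j)
    simp only at hthis ⊢
    calc (A₂ j * ((A₁ i)ᵀ * X)ᵀ).trace
        = (A₁ i * A₂ j * Xᵀ).trace := by
          rw [transpose_mul, transpose_transpose, ← Matrix.mul_assoc,
            Matrix.trace_mul_comm (A₂ j * Xᵀ) (A₁ i), ← Matrix.mul_assoc]
      _ = (A₁ i * A₂ j * Yᵀ).trace := hthis
      _ = (A₂ j * ((A₁ i)ᵀ * Y)ᵀ).trace := by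
          rw [transpose_mul, transpose_transpose, ← Matrix.mul_assoc,
            Matrix.trace_mul_comm (A₂ j * Yᵀ) (A₁ i), ← Matrix.mul_assoc]
  ext p c
  obtain ⟨q0⟩ := Fin.pos_iff_nonempty.mp hD₂
  have h2 : (Matrix.of fun (p : Fin D₁) (_ : Fin D₂) => X p c)
      = (Matrix.of fun (p : Fin D₁) (_ : Fin D₂) => Y p c) := by
    apply h₁
    funext i
    simp only
    have key : ∀ Z : Matrix (Fin D₁) (Fin D₃) ℂ,
        (A₁ i * (Matrix.of fun (p : Fin D₁) (_ : Fin D₂) => Z p c)ᵀ).trace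
          = ∑ q : Fin D₂, ((A₁ i)ᵀ * Z) q c := by
      intro Z
      simp only [Matrix.trace, Matrix.diag, Matrix.mul_apply, Matrix.transpose_apply,
        Matrix.of_apply]
      rw [Finset.sum_comm]
    rw [key X, key Y, h1 i]
  exact congrFun (congrFun h2 p) q0
end

section
/- Let A be an injective MPS tensor with left inverse A⁻¹. If two matrices X₁, X₂ inserted on a bond of a three-site injective MPS give the same state, i.e. ∑ Tr(A₁^{i} X₁ A₂^{j} A₃^{k}) |ijk⟩ = ∑ Tr(A₁^{i} X₂ A₂^{j} A₃^{k}) |ijk⟩ for injective tensors A₁, A₂, A₃, then X₁ = X₂. -/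
open Matrix

lemma span_top_of_inj {d D E : ℕ}
    (A : Fin d → Matrix (Fin D) (Fin E) ℂ)
    (hA : Function.Injective fun X : Matrix (Fin D) (Fin E) ℂ =>
      fun i : Fin d => (A i * Xᵀ).trace)
    (B : Matrix (Fin D) (Fin E) ℂ) :
    B ∈ Submodule.span ℂ (Set.range A) := by
  by_contra hB
  obtain ⟨f, hf, hmap⟩ :=
    (Submodule.span ℂ (Set.range A)).exists_dual_map_eq_bot_of_notMem hB inferInstance
  -- represent f as M ↦ trace (M * Cᵀ)
  set C : Matrix (Fin D) (Fin E) ℂ := fun a b => f (Matrix.single a b 1) with hC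
  have hrep : ∀ M : Matrix (Fin D) (Fin E) ℂ, f M = (M * Cᵀ).trace := by
    intro M
    have hM : M = ∑ a : Fin D, ∑ b : Fin E, M a b • Matrix.single a b 1 := by
      conv_lhs => rw [Matrix.matrix_eq_sum_single M]
      refine Finset.sum_congr rfl fun a _ => Finset.sum_congr rfl fun b _ => ?_
      rw [Matrix.smul_single, smul_eq_mul, mul_one]
    calc f M = f (∑ a : Fin D, ∑ b : Fin E, M a b • Matrix.single a b 1) := by rw [← hM]
      _ = ∑ a : Fin D, ∑ b : Fin E, M a b * C a b := by
          rw [map_sum]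
          refine Finset.sum_congr rfl fun a _ => ?_
          rw [map_sum]
          refine Finset.sum_congr rfl fun b _ => ?_
          rw [_root_.map_smul, smul_eq_mul]
      _ = (M * Cᵀ).trace := by
          rw [Matrix.trace]
          simp [Matrix.mul_apply, Matrix.diag]
  have hCzero : C = 0 := by
    apply hA
    funext i
    have : f (A i) = 0 := by
      have : f (A i) ∈ (Submodule.span ℂ (Set.range A)).map f :=
        ⟨A i, Submodule.subset_span ⟨i, rfl⟩, rfl⟩
      rw [hmap] at this
      simpa using this
    simp only [← hrep]
    simp [this, hrep, Matrix.transpose_zero]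
  exact hf (by rw [hrep, hCzero]; simp)

/-- Two bond insertions giving the same three-site injective MPS state are equal. -/
theorem bond_insertion_unique (d₁ d₂ d₃ D₁ D₂ D₃ : ℕ)
    (hD₁ : 0 < D₁) (hD₂ : 0 < D₂) (hD₃ : 0 < D₃)
    (A₁ : Fin d₁ → Matrix (Fin D₁) (Fin D₂) ℂ)
    (A₂ : Fin d₂ → Matrix (Fin D₂) (Fin D₃) ℂ)
    (A₃ : Fin d₃ → Matrix (Fin D₃) (Fin D₁) ℂ)
    (h₁ : Function.Injective fun X : Matrix (Fin D₁) (Fin D₂) ℂ =>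
      fun i : Fin d₁ => (A₁ i * Xᵀ).trace)
    (h₂ : Function.Injective fun X : Matrix (Fin D₂) (Fin D₃) ℂ =>
      fun j : Fin d₂ => (A₂ j * Xᵀ).trace)
    (h₃ : Function.Injective fun X : Matrix (Fin D₃) (Fin D₁) ℂ =>
      fun k : Fin d₃ => (A₃ k * Xᵀ).trace)
    (X₁ X₂ : Matrix (Fin D₂) (Fin D₂) ℂ)
    (h : ∀ (i : Fin d₁) (j : Fin d₂) (k : Fin d₃),
      (A₁ i * X₁ * A₂ j * A₃ k).trace = (A₁ i * X₂ * A₂ j * A₃ k).trace) :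
    X₁ = X₂ := by
  set Y := X₁ - X₂ with hY
  suffices hY0 : Y = 0 by
    have := sub_eq_zero.mp hY0; exact this
  -- base vanishing
  have base : ∀ (i : Fin d₁) (j : Fin d₂) (k : Fin d₃),
      (A₁ i * Y * A₂ j * A₃ k).trace = 0 := by
    intro i j k
    have : A₁ i * Y * A₂ j * A₃ k
        = A₁ i * X₁ * A₂ j * A₃ k - A₁ i * X₂ * A₂ j * A₃ k := by
      simp [hY, Matrix.mul_sub, Matrix.sub_mul]
    rw [this, Matrix.trace_sub, h i j k, sub_self]
  -- step 1: extend over M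
  have step1 : ∀ (M : Matrix (Fin D₁) (Fin D₂) ℂ) (j : Fin d₂) (k : Fin d₃),
      (M * Y * A₂ j * A₃ k).trace = 0 := by
    intro M j k
    refine Submodule.span_induction ?_ ?_ ?_ ?_ (span_top_of_inj A₁ h₁ M)
    · rintro _ ⟨i, rfl⟩; exact base i j k
    · simp
    · intro a b _ _ ha hb
      simp [Matrix.add_mul, Matrix.trace_add, ha, hb]
    · intro c a _ ha
      simp [Matrix.smul_mul, Matrix.trace_smul, ha]
  -- step 2: extend over N
  have step2 : ∀ (M : Matrix (Fin D₁) (Fin D₂) ℂ) (N : Matrix (Fin D₂) (Fin D₃) ℂ)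
      (k : Fin d₃), (M * Y * N * A₃ k).trace = 0 := by
    intro M N k
    refine Submodule.span_induction ?_ ?_ ?_ ?_ (span_top_of_inj A₂ h₂ N)
    · rintro _ ⟨j, rfl⟩; exact step1 M j k
    · simp
    · intro a b _ _ ha hb
      simp [Matrix.mul_add, Matrix.add_mul, Matrix.trace_add, ha, hb]
    · intro c a _ ha
      simp [Matrix.mul_smul, Matrix.smul_mul, Matrix.trace_smul, ha]
  -- step 3: extend over P
  have step3 : ∀ (M : Matrix (Fin D₁) (Fin D₂) ℂ) (N : Matrix (Fin D₂) (Fin D₃) ℂ)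
      (P : Matrix (Fin D₃) (Fin D₁) ℂ), (M * Y * N * P).trace = 0 := by
    intro M N P
    refine Submodule.span_induction ?_ ?_ ?_ ?_ (span_top_of_inj A₃ h₃ P)
    · rintro _ ⟨k, rfl⟩; exact step2 M N k
    · simp
    · intro a b _ _ ha hb
      simp [Matrix.mul_add, Matrix.trace_add, ha, hb]
    · intro c a _ ha
      simp [Matrix.mul_smul, Matrix.trace_smul, ha]
  -- conclude
  ext b c
  have a0 : Fin D₁ := ⟨0, hD₁⟩
  have c0 : Fin D₃ := ⟨0, hD₃⟩
  have := step3 (Matrix.single a0 b (1:ℂ)) (Matrix.single c c0 (1:ℂ))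
    (Matrix.single c0 a0 (1:ℂ))
  have hcalc : (Matrix.single a0 b (1:ℂ) * Y * Matrix.single c c0 (1:ℂ) *
      Matrix.single c0 a0 (1:ℂ)).trace = Y b c := by
    simp [Matrix.trace, Matrix.diag, Matrix.mul_apply, Matrix.single, ite_and,
      Finset.sum_ite_eq, Finset.sum_ite_eq', Finset.mul_sum, Finset.sum_mul]
  rw [hcalc] at this
  simpa using this
end

section
/- Given an injective MPS tensor A₁ with left inverse A₁⁻¹, the map X ↦ O₁(X), where O₁(X) is the physical operator on site 1 defined by O₁(X) = ∑_{i,i'} Tr((A₁⁻¹)^{i'} diagram with X inserted on the right virtual leg of A₁^i) |i⟩⟨i'|, i.e. the full contraction of (A₁⁻¹)^{i'} with A₁^{i} after X is inserted on the right virtual leg of A₁^{i}, is an algebra homomorphism from Mat(D₂) to Mat(d₁); moreover inserting X on the bond (1,2) of the MPS equals acting with O₁(X) on the first physical site: ∑ Tr(A₁^{i} X A₂^{j} A₃^{k}) |ijk⟩ = (O₁(X)⊗Id⊗Id) ∑ Tr(A₁^{i} A₂^{j} A₃^{k}) |ijk⟩. -/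
open Matrix

/-- The physical operator on site 1 implementing the virtual insertion `X`. -/
noncomputable def O1 {d₁ D₁ D₂ : ℕ}
    (A₁ Ainv : Fin d₁ → Matrix (Fin D₁) (Fin D₂) ℂ)
    (X : Matrix (Fin D₂) (Fin D₂) ℂ) : Matrix (Fin d₁) (Fin d₁) ℂ :=
  Matrix.of fun i i' => (A₁ i * X * (Ainv i')ᵀ).trace

lemma O1_apply {d₁ D₁ D₂ : ℕ} (A₁ Ainv : Fin d₁ → Matrix (Fin D₁) (Fin D₂) ℂ)
    (X : Matrix (Fin D₂) (Fin D₂) ℂ) (i i' : Fin d₁) :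
    O1 A₁ Ainv X i i' = ∑ α, ∑ β', (A₁ i * X) α β' * Ainv i' α β' := by
  simp [O1, trace, mul_apply, diag]

lemma key {d₁ D₁ D₂ : ℕ} (A₁ Ainv : Fin d₁ → Matrix (Fin D₁) (Fin D₂) ℂ)
    (hinv : ∀ (α α' : Fin D₁) (β β' : Fin D₂),
      (∑ i : Fin d₁, A₁ i α β * Ainv i α' β') =
        (if α = α' then (1 : ℂ) else 0) * (if β = β' then (1 : ℂ) else 0))
    (X : Matrix (Fin D₂) (Fin D₂) ℂ) (i : Fin d₁) (α' : Fin D₁) (γ : Fin D₂) :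
    ∑ i', O1 A₁ Ainv X i i' * A₁ i' α' γ = (A₁ i * X) α' γ := by
  simp only [O1_apply, Finset.sum_mul]
  rw [Finset.sum_comm]
  have : ∀ α : Fin D₁, ∑ i', ∑ β', (A₁ i * X) α β' * Ainv i' α β' * A₁ i' α' γ
      = ∑ β', (A₁ i * X) α β' * ((if α' = α then (1:ℂ) else 0) * (if γ = β' then (1:ℂ) else 0)) := by
    intro α
    rw [Finset.sum_comm]
    refine Finset.sum_congr rfl fun β' _ => ?_
    rw [← hinv α' α γ β', Finset.mul_sum]
    refine Finset.sum_congr rfl fun i' _ => ?_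
    ring
  simp only [this]
  simp [Finset.sum_ite_eq, mul_comm]

lemma key2 {d₁ D₁ D₂ : ℕ} {n : Type*} [Fintype n]
    (A₁ Ainv : Fin d₁ → Matrix (Fin D₁) (Fin D₂) ℂ)
    (hinv : ∀ (α α' : Fin D₁) (β β' : Fin D₂),
      (∑ i : Fin d₁, A₁ i α β * Ainv i α' β') =
        (if α = α' then (1 : ℂ) else 0) * (if β = β' then (1 : ℂ) else 0))
    (X : Matrix (Fin D₂) (Fin D₂) ℂ) (M : Matrix (Fin D₂) n ℂ)
    (i : Fin d₁) (α : Fin D₁) (γ : n) :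
    ∑ i', O1 A₁ Ainv X i i' * (A₁ i' * M) α γ = (A₁ i * X * M) α γ := by
  simp only [mul_apply, Finset.mul_sum]
  rw [Finset.sum_comm]
  refine Finset.sum_congr rfl fun β _ => ?_
  simp only [← mul_assoc]
  rw [← Finset.sum_mul, key A₁ Ainv hinv X i α β, mul_apply]

/-- `X ↦ O₁(X)` is an algebra homomorphism, and inserting `X` on bond (1,2)
equals acting with `O₁(X)` on the first physical site. -/
theorem O1_is_algebra_hom_and_implements_insertion (d₁ d₂ d₃ D₁ D₂ D₃ : ℕ)
    (A₁ Ainv : Fin d₁ → Matrix (Fin D₁) (Fin D₂) ℂ)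
    (hA₁ : Function.Injective fun X : Matrix (Fin D₁) (Fin D₂) ℂ =>
      fun i : Fin d₁ => (A₁ i * Xᵀ).trace)
    (hinv : ∀ (α α' : Fin D₁) (β β' : Fin D₂),
      (∑ i : Fin d₁, A₁ i α β * Ainv i α' β') =
        (if α = α' then (1 : ℂ) else 0) * (if β = β' then (1 : ℂ) else 0))
    (A₂ : Fin d₂ → Matrix (Fin D₂) (Fin D₃) ℂ)
    (A₃ : Fin d₃ → Matrix (Fin D₃) (Fin D₁) ℂ) :
    (∀ X Y : Matrix (Fin D₂) (Fin D₂) ℂ,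
        O1 A₁ Ainv (X + Y) = O1 A₁ Ainv X + O1 A₁ Ainv Y) ∧
    (∀ (c : ℂ) (X : Matrix (Fin D₂) (Fin D₂) ℂ),
        O1 A₁ Ainv (c • X) = c • O1 A₁ Ainv X) ∧
    (∀ X Y : Matrix (Fin D₂) (Fin D₂) ℂ,
        O1 A₁ Ainv (X * Y) = O1 A₁ Ainv X * O1 A₁ Ainv Y) ∧
    (∀ (X : Matrix (Fin D₂) (Fin D₂) ℂ) (i : Fin d₁) (j : Fin d₂) (k : Fin d₃),
        (A₁ i * X * A₂ j * A₃ k).trace =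
          ∑ i' : Fin d₁, O1 A₁ Ainv X i i' * (A₁ i' * A₂ j * A₃ k).trace) := by
  refine ⟨?_, ?_, ?_, ?_⟩
  · intro X Y
    ext i i'
    show (A₁ i * (X + Y) * (Ainv i')ᵀ).trace = _
    rw [Matrix.mul_add, Matrix.add_mul, trace_add]
    rfl
  · intro c X
    ext i i'
    show (A₁ i * (c • X) * (Ainv i')ᵀ).trace = _
    rw [Matrix.mul_smul, Matrix.smul_mul, trace_smul]
    rfl
  · intro X Y
    ext i i''
    rw [Matrix.mul_apply]
    symm
    calc ∑ i', O1 A₁ Ainv X i i' * O1 A₁ Ainv Y i' i''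
        = ∑ i', O1 A₁ Ainv X i i' * (∑ α, ∑ γ', (A₁ i' * Y) α γ' * Ainv i'' α γ') := by
          simp only [O1_apply]
      _ = ∑ α, ∑ γ', (∑ i', O1 A₁ Ainv X i i' * ((A₁ i' * Y) α γ')) * Ainv i'' α γ' := by
          simp only [Finset.mul_sum, Finset.sum_mul]
          rw [Finset.sum_comm]
          refine Finset.sum_congr rfl fun α _ => ?_
          rw [Finset.sum_comm]
          simp [mul_assoc]
      _ = ∑ α, ∑ γ', (A₁ i * X * Y) α γ' * Ainv i'' α γ' := by
          simp only [key2 A₁ Ainv hinv X Y]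
      _ = O1 A₁ Ainv (X * Y) i i'' := by
          rw [O1_apply]
          simp only [Matrix.mul_assoc]
  · intro X i j k
    simp only [trace, diag, Finset.mul_sum]
    rw [Finset.sum_comm]
    refine Finset.sum_congr rfl fun α _ => ?_
    have h := key2 A₁ Ainv hinv X (A₂ j * A₃ k) i α α
    simp only [Matrix.mul_assoc] at h ⊢
    exact h.symm
end

section
/- Lemma (virtual-operator correspondence): Let B₁, B₂, B₃ be injective MPS tensors on a ring of three sites, and let O₁ ∈ Mat(d₁), O₂ ∈ Mat(d₂) be physical operators such that acting with O₁ on site 1 and acting with O₂ on site 2 transform the MPS to the same state. Then there exists a matrix W such that ∑_{i'}(O₁)_{i,i'} B₁^{i'} = B₁^{i} W for all i, and ∑_{j'}(O₂)_{j,j'} B₂^{j'} = W B₂^{j} for all j. Moreover W is unique, and the maps O₁ ↦ W and O₂ᵀ ↦ W are algebra homomorphisms on their domains. -/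
open Matrix

/-- From injectivity of the dual (trace-pairing) map, the tensors span all matrices. -/
lemma mps_span_surj {d D₁ D₂ : ℕ} (B : Fin d → Matrix (Fin D₁) (Fin D₂) ℂ)
    (h : Function.Injective fun X : Matrix (Fin D₁) (Fin D₂) ℂ =>
      fun i : Fin d => (B i * Xᵀ).trace) :
    ∀ M : Matrix (Fin D₁) (Fin D₂) ℂ, ∃ c : Fin d → ℂ, ∑ i, c i • B i = M := by
  classical
  set A : Matrix (Fin d) (Fin D₁ × Fin D₂) ℂ :=
    Matrix.of (fun i p => B i p.1 p.2) with hAdef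
  have key : ∀ X : Matrix (Fin D₁) (Fin D₂) ℂ,
      (fun i => (B i * Xᵀ).trace) = A.mulVec (fun p => X p.1 p.2) := by
    intro X
    funext i
    simp only [Matrix.trace, Matrix.diag, Matrix.mul_apply, Matrix.transpose_apply,
      Matrix.mulVec, dotProduct, hAdef, Matrix.of_apply, Fintype.sum_prod_type]
  have hA : Function.Injective A.mulVecLin := by
    intro v w hvw
    have h' := @h (Matrix.of fun a b => v (a, b)) (Matrix.of fun a b => w (a, b)) (by
      show (fun i => (B (i:Fin d) * (Matrix.of fun a b => v (a, b))ᵀ).trace) =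
        (fun i => (B i * (Matrix.of fun a b => w (a, b))ᵀ).trace)
      rw [key, key]
      have hv : (fun p : Fin D₁ × Fin D₂ => (Matrix.of fun a b => v (a, b)) p.1 p.2) = v := by
        funext p; simp
      have hw : (fun p : Fin D₁ × Fin D₂ => (Matrix.of fun a b => w (a, b)) p.1 p.2) = w := by
        funext p; simp
      rw [hv, hw]
      simpa using hvw)
    funext p
    have := congrFun (congrFun h' p.1) p.2
    simpa using this
  have hrank : A.rank = Fintype.card (Fin D₁ × Fin D₂) := by
    rw [Matrix.rank, LinearMap.finrank_range_of_inj hA, Module.finrank_pi]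
  have hrankT : Aᵀ.rank = Fintype.card (Fin D₁ × Fin D₂) := by
    rw [Matrix.rank_transpose]; exact hrank
  have hsurj : Function.Surjective Aᵀ.mulVecLin := by
    rw [← LinearMap.range_eq_top]
    apply Submodule.eq_top_of_finrank_eq
    rw [← Matrix.rank] at *
    rw [hrankT, Module.finrank_pi]
  intro M
  obtain ⟨c, hc⟩ := hsurj (fun p => M p.1 p.2)
  refine ⟨c, ?_⟩
  ext a b
  have := congrFun hc (a, b)
  simp only [Matrix.mulVecLin_apply, Matrix.mulVec, dotProduct,
    Matrix.transpose_apply, hAdef, Matrix.of_apply] at this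
  simp only [Matrix.sum_apply, Matrix.smul_apply, smul_eq_mul]
  rw [← this]
  exact Finset.sum_congr rfl fun i _ => mul_comm _ _


lemma sum_stdBasis_diag (D : ℕ) :
    ∑ b : Fin D, Matrix.single b b (1 : ℂ) = 1 := by
  ext a c
  rw [Matrix.sum_apply]
  by_cases h : a = c
  · subst h
    rw [Matrix.one_apply_eq, Finset.sum_eq_single a]
    · simp [Matrix.single]
    · intro b _ hb
      simp [Matrix.single, hb]
    · simp
  · rw [Matrix.one_apply_ne h, Finset.sum_eq_zero]
    intro b _
    simp only [Matrix.single, Matrix.of_apply, ite_eq_right_iff, and_imp]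
    rintro rfl rfl
    exact absurd rfl h

lemma stdBasis_mul_rect {D₁ D₂ D₃ : ℕ} (a : Fin D₁) (b : Fin D₂) (e : Fin D₃) :
    Matrix.single a b (1 : ℂ) * Matrix.single b e (1 : ℂ) =
      Matrix.single a e (1 : ℂ) := by
  ext x y
  simp only [Matrix.mul_apply, Matrix.single, Matrix.of_apply]
  rw [Finset.sum_eq_single b]
  · by_cases h1 : a = x <;> by_cases h2 : e = y <;> simp [h1, h2]
  · intro z _ hz
    simp [Ne.symm hz]
  · simp

lemma mps_left_inv {d D₁ D₂ : ℕ} (hD₁ : 0 < D₁) (B : Fin d → Matrix (Fin D₁) (Fin D₂) ℂ)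
    (hs : ∀ M : Matrix (Fin D₁) (Fin D₂) ℂ, ∃ c : Fin d → ℂ, ∑ i, c i • B i = M) :
    ∃ L : Fin d → Matrix (Fin D₂) (Fin D₁) ℂ, ∑ i, L i * B i = 1 := by
  classical
  set a₀ : Fin D₁ := ⟨0, hD₁⟩
  choose c hc using fun b : Fin D₂ => hs (Matrix.single a₀ b (1 : ℂ))
  refine ⟨fun i => ∑ b : Fin D₂, c b i • Matrix.single b a₀ (1 : ℂ), ?_⟩
  calc ∑ i, (∑ b : Fin D₂, c b i • Matrix.single b a₀ (1 : ℂ)) * B i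
      = ∑ i, ∑ b : Fin D₂, Matrix.single b a₀ (1 : ℂ) * (c b i • B i) := by
        refine Finset.sum_congr rfl fun i _ => ?_
        rw [Matrix.sum_mul]
        refine Finset.sum_congr rfl fun b _ => ?_
        rw [Matrix.smul_mul, Matrix.mul_smul]
    _ = ∑ b : Fin D₂, Matrix.single b a₀ (1 : ℂ) * (∑ i, c b i • B i) := by
        rw [Finset.sum_comm]
        exact Finset.sum_congr rfl fun b _ => (Matrix.mul_sum _ _ _).symm
    _ = ∑ b : Fin D₂, Matrix.single b a₀ (1 : ℂ) * Matrix.single a₀ b (1 : ℂ) := by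
        refine Finset.sum_congr rfl fun b _ => ?_
        rw [hc]
    _ = ∑ b : Fin D₂, Matrix.single b b (1 : ℂ) := by
        refine Finset.sum_congr rfl fun b _ => ?_
        rw [stdBasis_mul_rect]
    _ = 1 := sum_stdBasis_diag D₂

lemma mps_right_inv {d D₂ D₃ : ℕ} (hD₃ : 0 < D₃) (B : Fin d → Matrix (Fin D₂) (Fin D₃) ℂ)
    (hs : ∀ M : Matrix (Fin D₂) (Fin D₃) ℂ, ∃ c : Fin d → ℂ, ∑ j, c j • B j = M) :
    ∃ R : Fin d → Matrix (Fin D₃) (Fin D₂) ℂ, ∑ j, B j * R j = 1 := by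
  classical
  set k₀ : Fin D₃ := ⟨0, hD₃⟩
  choose c hc using fun b : Fin D₂ => hs (Matrix.single b k₀ (1 : ℂ))
  refine ⟨fun j => ∑ b : Fin D₂, c b j • Matrix.single k₀ b (1 : ℂ), ?_⟩
  calc ∑ j, B j * (∑ b : Fin D₂, c b j • Matrix.single k₀ b (1 : ℂ))
      = ∑ j, ∑ b : Fin D₂, (c b j • B j) * Matrix.single k₀ b (1 : ℂ) := by
        refine Finset.sum_congr rfl fun j _ => ?_
        rw [Matrix.mul_sum]
        refine Finset.sum_congr rfl fun b _ => ?_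
        rw [Matrix.mul_smul, Matrix.smul_mul]
    _ = ∑ b : Fin D₂, (∑ j, c b j • B j) * Matrix.single k₀ b (1 : ℂ) := by
        rw [Finset.sum_comm]
        exact Finset.sum_congr rfl fun b _ => (Matrix.sum_mul _ _ _).symm
    _ = ∑ b : Fin D₂, Matrix.single b k₀ (1 : ℂ) * Matrix.single k₀ b (1 : ℂ) := by
        refine Finset.sum_congr rfl fun b _ => ?_
        rw [hc]
    _ = ∑ b : Fin D₂, Matrix.single b b (1 : ℂ) := by
        refine Finset.sum_congr rfl fun b _ => ?_
        rw [stdBasis_mul_rect]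
    _ = 1 := sum_stdBasis_diag D₂


set_option maxHeartbeats 1000000 in
/-- virtual-operator correspondence.  If two physical operators on
neighbouring sites of a three-site injective MPS transform the state the same way,
they are both implemented by a unique virtual matrix `W` on the shared bond; and the
correspondences `O₁ ↦ W`, `O₂ᵀ ↦ W` are algebra homomorphisms. -/
theorem virtual_operator_correspondence (d₁ d₂ d₃ D₁ D₂ D₃ : ℕ)
    (hD₁ : 0 < D₁) (hD₂ : 0 < D₂) (hD₃ : 0 < D₃)
    (B₁ : Fin d₁ → Matrix (Fin D₁) (Fin D₂) ℂ)
    (B₂ : Fin d₂ → Matrix (Fin D₂) (Fin D₃) ℂ)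
    (B₃ : Fin d₃ → Matrix (Fin D₃) (Fin D₁) ℂ)
    (h₁ : Function.Injective fun X : Matrix (Fin D₁) (Fin D₂) ℂ =>
      fun i : Fin d₁ => (B₁ i * Xᵀ).trace)
    (h₂ : Function.Injective fun X : Matrix (Fin D₂) (Fin D₃) ℂ =>
      fun j : Fin d₂ => (B₂ j * Xᵀ).trace)
    (h₃ : Function.Injective fun X : Matrix (Fin D₃) (Fin D₁) ℂ =>
      fun k : Fin d₃ => (B₃ k * Xᵀ).trace)
    (O₁ : Matrix (Fin d₁) (Fin d₁) ℂ) (O₂ : Matrix (Fin d₂) (Fin d₂) ℂ)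
    (hO : ∀ (i : Fin d₁) (j : Fin d₂) (k : Fin d₃),
      ((∑ i' : Fin d₁, O₁ i i' • B₁ i') * B₂ j * B₃ k).trace =
      (B₁ i * (∑ j' : Fin d₂, O₂ j j' • B₂ j') * B₃ k).trace) :
    (∃! W : Matrix (Fin D₂) (Fin D₂) ℂ,
        (∀ i : Fin d₁, (∑ i' : Fin d₁, O₁ i i' • B₁ i') = B₁ i * W) ∧
        (∀ j : Fin d₂, (∑ j' : Fin d₂, O₂ j j' • B₂ j') = W * B₂ j)) ∧
    -- `O₁ ↦ W` is an algebra homomorphism on its domain: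
    (∀ i : Fin d₁, (∑ i' : Fin d₁, (1 : Matrix (Fin d₁) (Fin d₁) ℂ) i i' • B₁ i') = B₁ i * (1 : Matrix (Fin D₂) (Fin D₂) ℂ)) ∧
    (∀ (P P' : Matrix (Fin d₁) (Fin d₁) ℂ) (V V' : Matrix (Fin D₂) (Fin D₂) ℂ),
      (∀ i, (∑ i', P i i' • B₁ i') = B₁ i * V) →
      (∀ i, (∑ i', P' i i' • B₁ i') = B₁ i * V') →
      ((∀ i, (∑ i', (P + P') i i' • B₁ i') = B₁ i * (V + V')) ∧
       (∀ i, (∑ i', (P * P') i i' • B₁ i') = B₁ i * (V * V')))) ∧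
    -- `O₂ᵀ ↦ W` is an algebra homomorphism on its domain:
    (∀ j : Fin d₂, (∑ j' : Fin d₂, (1 : Matrix (Fin d₂) (Fin d₂) ℂ) j j' • B₂ j') = (1 : Matrix (Fin D₂) (Fin D₂) ℂ) * B₂ j) ∧
    (∀ (Q Q' : Matrix (Fin d₂) (Fin d₂) ℂ) (V V' : Matrix (Fin D₂) (Fin D₂) ℂ),
      (∀ j, (∑ j', Q j j' • B₂ j') = V * B₂ j) →
      (∀ j, (∑ j', Q' j j' • B₂ j') = V' * B₂ j) →
      ((∀ j, (∑ j', (Q + Q') j j' • B₂ j') = (V + V') * B₂ j) ∧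
       (∀ j, (∑ j', (Q * Q') j j' • B₂ j') = (V' * V) * B₂ j))) := by
  classical
  obtain ⟨L, hL⟩ := mps_left_inv hD₁ B₁ (mps_span_surj B₁ h₁)
  obtain ⟨R, hR⟩ := mps_right_inv hD₃ B₂ (mps_span_surj B₂ h₂)
  have hstep : ∀ i j, (∑ i', O₁ i i' • B₁ i') * B₂ j = B₁ i * (∑ j', O₂ j j' • B₂ j') := by
    intro i j
    have h' : (fun k => (B₃ k * (((∑ i', O₁ i i' • B₁ i') * B₂ j)ᵀ)ᵀ).trace)
        = (fun k => (B₃ k * ((B₁ i * (∑ j', O₂ j j' • B₂ j'))ᵀ)ᵀ).trace) := by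
      funext k
      rw [Matrix.transpose_transpose, Matrix.transpose_transpose,
        Matrix.trace_mul_comm (B₃ k), Matrix.trace_mul_comm (B₃ k)]
      exact hO i j k
    have h'' := h₃ h'
    exact Matrix.transpose_inj.mp h''
  set W : Matrix (Fin D₂) (Fin D₂) ℂ := ∑ i, L i * (∑ i', O₁ i i' • B₁ i') with hWdef
  have hWC : ∀ j, (∑ j', O₂ j j' • B₂ j') = W * B₂ j := by
    intro j
    calc (∑ j', O₂ j j' • B₂ j') = 1 * (∑ j', O₂ j j' • B₂ j') := (Matrix.one_mul _).symm
      _ = (∑ i, L i * B₁ i) * (∑ j', O₂ j j' • B₂ j') := by rw [hL]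
      _ = ∑ i, L i * (B₁ i * (∑ j', O₂ j j' • B₂ j')) := by
          rw [Matrix.sum_mul]
          exact Finset.sum_congr rfl fun i _ => Matrix.mul_assoc _ _ _
      _ = ∑ i, L i * ((∑ i', O₁ i i' • B₁ i') * B₂ j) := by
          exact Finset.sum_congr rfl fun i _ => by rw [hstep i j]
      _ = (∑ i, L i * (∑ i', O₁ i i' • B₁ i')) * B₂ j := by
          rw [Matrix.sum_mul]
          exact Finset.sum_congr rfl fun i _ => (Matrix.mul_assoc _ _ _).symm
      _ = W * B₂ j := rfl
  have hBW : ∀ i, (∑ i', O₁ i i' • B₁ i') = B₁ i * W := by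
    intro i
    calc (∑ i', O₁ i i' • B₁ i') = (∑ i', O₁ i i' • B₁ i') * 1 := (Matrix.mul_one _).symm
      _ = (∑ i', O₁ i i' • B₁ i') * (∑ j, B₂ j * R j) := by rw [hR]
      _ = ∑ j, ((∑ i', O₁ i i' • B₁ i') * B₂ j) * R j := by
          rw [Matrix.mul_sum]
          exact Finset.sum_congr rfl fun j _ => (Matrix.mul_assoc _ _ _).symm
      _ = ∑ j, (B₁ i * (W * B₂ j)) * R j := by
          refine Finset.sum_congr rfl fun j _ => ?_
          rw [hstep i j, hWC j]
      _ = ∑ j, (B₁ i * W) * (B₂ j * R j) := by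
          refine Finset.sum_congr rfl fun j _ => ?_
          rw [← Matrix.mul_assoc (B₁ i) W (B₂ j), Matrix.mul_assoc (B₁ i * W) (B₂ j) (R j)]
      _ = (B₁ i * W) * (∑ j, B₂ j * R j) := (Matrix.mul_sum _ _ _).symm
      _ = B₁ i * W := by rw [hR, Matrix.mul_one]
  refine ⟨⟨W, ⟨hBW, hWC⟩, ?_⟩, ?_, ?_, ?_, ?_⟩
  · -- uniqueness
    rintro W' ⟨hW1', _⟩
    calc W' = 1 * W' := (Matrix.one_mul _).symm
      _ = (∑ i, L i * B₁ i) * W' := by rw [hL]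
      _ = ∑ i, L i * (B₁ i * W') := by
          rw [Matrix.sum_mul]
          exact Finset.sum_congr rfl fun i _ => Matrix.mul_assoc _ _ _
      _ = ∑ i, L i * (B₁ i * W) := by
          refine Finset.sum_congr rfl fun i _ => ?_
          rw [← hW1' i, hBW i]
      _ = (∑ i, L i * B₁ i) * W := by
          rw [Matrix.sum_mul]
          exact Finset.sum_congr rfl fun i _ => (Matrix.mul_assoc _ _ _).symm
      _ = W := by rw [hL, Matrix.one_mul]
  · -- O₁ identity
    intro i
    rw [Matrix.mul_one, Finset.sum_eq_single i]
    · simp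
    · intro b _ hb
      rw [Matrix.one_apply_ne (Ne.symm hb), zero_smul]
    · simp
  · -- O₁ hom
    intro P P' V V' hP hP'
    constructor
    · intro i
      calc ∑ i', (P + P') i i' • B₁ i'
          = (∑ i', P i i' • B₁ i') + (∑ i', P' i i' • B₁ i') := by
            rw [← Finset.sum_add_distrib]
            exact Finset.sum_congr rfl fun i' _ => by
              rw [Matrix.add_apply, add_smul]
        _ = B₁ i * V + B₁ i * V' := by rw [hP i, hP' i]
        _ = B₁ i * (V + V') := (Matrix.mul_add _ _ _).symm
    · intro i
      calc ∑ i', (P * P') i i' • B₁ i'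
          = ∑ i', ∑ m, (P i m * P' m i') • B₁ i' := by
            refine Finset.sum_congr rfl fun i' _ => ?_
            rw [Matrix.mul_apply, Finset.sum_smul]
        _ = ∑ m, P i m • (∑ i', P' m i' • B₁ i') := by
            rw [Finset.sum_comm]
            refine Finset.sum_congr rfl fun m _ => ?_
            rw [Finset.smul_sum]
            exact Finset.sum_congr rfl fun i' _ => (smul_smul _ _ _).symm
        _ = ∑ m, P i m • (B₁ m * V') := by
            exact Finset.sum_congr rfl fun m _ => by rw [hP' m]
        _ = (∑ m, P i m • B₁ m) * V' := by
            rw [Matrix.sum_mul]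
            exact Finset.sum_congr rfl fun m _ => (Matrix.smul_mul _ _ _).symm
        _ = (B₁ i * V) * V' := by rw [hP i]
        _ = B₁ i * (V * V') := Matrix.mul_assoc _ _ _
  · -- O₂ identity
    intro j
    rw [Matrix.one_mul, Finset.sum_eq_single j]
    · simp
    · intro b _ hb
      rw [Matrix.one_apply_ne (Ne.symm hb), zero_smul]
    · simp
  · -- O₂ hom
    intro Q Q' V V' hQ hQ'
    constructor
    · intro j
      calc ∑ j', (Q + Q') j j' • B₂ j'
          = (∑ j', Q j j' • B₂ j') + (∑ j', Q' j j' • B₂ j') := by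
            rw [← Finset.sum_add_distrib]
            exact Finset.sum_congr rfl fun j' _ => by
              rw [Matrix.add_apply, add_smul]
        _ = V * B₂ j + V' * B₂ j := by rw [hQ j, hQ' j]
        _ = (V + V') * B₂ j := (Matrix.add_mul _ _ _).symm
    · intro j
      calc ∑ j', (Q * Q') j j' • B₂ j'
          = ∑ j', ∑ m, (Q j m * Q' m j') • B₂ j' := by
            refine Finset.sum_congr rfl fun j' _ => ?_
            rw [Matrix.mul_apply, Finset.sum_smul]
        _ = ∑ m, Q j m • (∑ j', Q' m j' • B₂ j') := by
            rw [Finset.sum_comm]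
            refine Finset.sum_congr rfl fun m _ => ?_
            rw [Finset.smul_sum]
            exact Finset.sum_congr rfl fun j' _ => (smul_smul _ _ _).symm
        _ = ∑ m, Q j m • (V' * B₂ m) := by
            exact Finset.sum_congr rfl fun m _ => by rw [hQ' m]
        _ = V' * (∑ m, Q j m • B₂ m) := by
            rw [Matrix.mul_sum]
            exact Finset.sum_congr rfl fun m _ => (Matrix.mul_smul _ _ _).symm
        _ = V' * (V * B₂ j) := by rw [hQ j]
        _ = (V' * V) * B₂ j := (Matrix.mul_assoc _ _ _).symm
end

section
/- Lemma 1 (gauge on an edge): Let A₁,A₂,A₃ and B₁,B₂,B₃ be two triples of injective MPS tensors generating the same three-site state: ∑Tr(A₁^i A₂^j A₃^k)|ijk⟩ = ∑Tr(B₁^i B₂^j B₃^k)|ijk⟩. Then the virtual bond dimensions on the edge (1,2) agree, and there exists an invertible matrix Z, unique up to a nonzero scalar, such that for every matrix X, ∑Tr(A₁^i X A₂^j A₃^k)|ijk⟩ = ∑Tr(B₁^i (Z⁻¹XZ) B₂^j B₃^k)|ijk⟩. -/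
open Matrix

/-!
Injectivity makes each family `Aₙ` (and `Bₙ`) span its space of matrices, and nondegeneracy of the
trace pairing turns the equality of the two states into equality of the linear relations satisfied
by `Aₙ` and by `Bₙ`. Hence there are linear isomorphisms `P, Q, S` of the bond spaces sending
`A₁ⁱ, A₂ʲ, A₃ᵏ` to `B₁ⁱ, B₂ʲ, B₃ᵏ`, with `tr (P M₁ * Q M₂ * S M₃) = tr (M₁ * M₂ * M₃)` for all
matrices.
Testing this identity against `P` and `S` shows that `Q` intertwines left multiplications:
`Q (X * M) = Ψ X * Q M` for an algebra isomorphism `Ψ : M_{D₂} ≃ M_{D₂'}`. By Skolem–Noether, `Ψ` is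
conjugation by an invertible `Z`, which forces `D₂ = D₂'`; and `Z` is unique up to a scalar because
only scalars commute with every matrix.
-/

theorem exists_linearEquiv_apply_eq_of_ker_eq {R V W ι : Type*} [Ring R] [AddCommGroup V]
    [Module R V] [AddCommGroup W] [Module R W] [Fintype ι] [DecidableEq ι] {A : ι → V} {B : ι → W}
    (hA : Submodule.span R (Set.range A) = ⊤) (hB : Submodule.span R (Set.range B) = ⊤)
    (h : LinearMap.ker (Fintype.linearCombination R A) =
      LinearMap.ker (Fintype.linearCombination R B)) :
    ∃ e : V ≃ₗ[R] W, ∀ i, e (A i) = B i := by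
  rw [span_range_eq_top_iff_surjective_fintypeLinearCombination] at hA hB
  refine ⟨((LinearMap.quotKerEquivOfSurjective _ hA).symm.trans
    (Submodule.quotEquivOfEq _ _ h)).trans (LinearMap.quotKerEquivOfSurjective _ hB), fun i => ?_⟩
  have hAi : (LinearMap.quotKerEquivOfSurjective _ hA).symm (A i) =
      Submodule.Quotient.mk (Pi.single i 1) := by
    rw [LinearEquiv.symm_apply_eq, LinearMap.quotKerEquivOfSurjective_apply_mk]
    simp
  simp [hAi, Submodule.quotEquivOfEq_mk, LinearMap.quotKerEquivOfSurjective_apply_mk]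

namespace Matrix

variable {K : Type*} [Field K] {l m n o : Type*}

theorem span_range_eq_top_of_injective_trace [Fintype m] [Fintype n] [DecidableEq m]
    [DecidableEq n] {ι : Type*} {A : ι → Matrix m n K}
    (hA : Function.Injective fun X : Matrix m n K => fun i => (A i * Xᵀ).trace) :
    Submodule.span K (Set.range A) = ⊤ := by
  by_contra h
  obtain ⟨f, hf, hfA⟩ :=
    Submodule.exists_dual_map_eq_bot_of_lt_top (lt_top_iff_ne_top.2 h) inferInstance
  set X : Matrix m n K := of fun a b => f (single a b 1)
  have hfX : f = traceLinearMap m K K ∘ₗ mulRightLinearMap m K Xᵀ := by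
    refine (Matrix.stdBasis K m n).ext ?_
    rintro ⟨a, b⟩
    simp [stdBasis_eq_single, trace_single_mul, X]
  have hX : X = 0 := hA <| funext fun i => by
    have : f (A i) ∈ (Submodule.span K (Set.range A)).map f :=
      Submodule.mem_map_of_mem (Submodule.subset_span (Set.mem_range_self i))
    rw [hfA, Submodule.mem_bot] at this
    simpa [hfX] using this
  exact hf (by rw [hfX, hX]; ext; simp)

theorem eq_of_forall_mul_eq [Fintype m] [DecidableEq m] [DecidableEq n] [Nonempty n]
    {Y₁ Y₂ : Matrix l m K} (h : ∀ N : Matrix m n K, Y₁ * N = Y₂ * N) : Y₁ = Y₂ := by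
  let r := Classical.arbitrary n
  ext a b
  simpa using congr_fun₂ (h (single b r 1)) a r

theorem eq_of_forall_mul_eq_of_span [Fintype n] [DecidableEq n] [DecidableEq l] [Nonempty l]
    {κ : Type*} {N : κ → Matrix n l K} (hN : Submodule.span K (Set.range N) = ⊤)
    {Y₁ Y₂ : Matrix m n K}
    (h : ∀ k, Y₁ * N k = Y₂ * N k) : Y₁ = Y₂ :=
  eq_of_forall_mul_eq fun N' => LinearMap.congr_fun
    (LinearMap.ext_on_range (f := mulLeftLinearMap l K Y₁) (g := mulLeftLinearMap l K Y₂) hN h) N'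

theorem eq_of_forall_trace_mul_eq_of_span [Fintype m] [Fintype n] {ι : Type*}
    {L : ι → Matrix n m K} (hL : Submodule.span K (Set.range L) = ⊤) {Y₁ Y₂ : Matrix m n K}
    (h : ∀ i, (L i * Y₁).trace = (L i * Y₂).trace) : Y₁ = Y₂ :=
  ext_iff_trace_mul_left.2 fun L' => LinearMap.congr_fun
    (LinearMap.ext_on_range (f := traceLinearMap n K K ∘ₗ mulRightLinearMap n K Y₁)
      (g := traceLinearMap n K K ∘ₗ mulRightLinearMap n K Y₂) hL h) L'

theorem eq_of_forall_trace_mul_mul_eq_of_span [Fintype l] [Fintype m] [Fintype n]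
    [DecidableEq l] [DecidableEq n] [Nonempty l] {ι κ : Type*} {L : ι → Matrix l m K}
    {N : κ → Matrix n l K}
    (hL : Submodule.span K (Set.range L) = ⊤) (hN : Submodule.span K (Set.range N) = ⊤)
    {Y₁ Y₂ : Matrix m n K} (h : ∀ i k, (L i * Y₁ * N k).trace = (L i * Y₂ * N k).trace) :
    Y₁ = Y₂ :=
  eq_of_forall_mul_eq_of_span hN fun k =>
    eq_of_forall_trace_mul_eq_of_span hL fun i => by simpa only [Matrix.mul_assoc] using h i k

theorem eq_of_forall_trace_mul_mul_mul_eq_of_span [Fintype l] [Fintype m] [Fintype n] [Fintype o]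
    [DecidableEq l] [DecidableEq n] [DecidableEq o] [Nonempty l] [Nonempty o] {ι κ μ : Type*}
    {L : ι → Matrix l m K} {M : κ → Matrix n o K} {N : μ → Matrix o l K}
    (hL : Submodule.span K (Set.range L) = ⊤) (hM : Submodule.span K (Set.range M) = ⊤)
    (hN : Submodule.span K (Set.range N) = ⊤) {Y₁ Y₂ : Matrix m n K}
    (h : ∀ i j k, (L i * Y₁ * M j * N k).trace = (L i * Y₂ * M j * N k).trace) : Y₁ = Y₂ :=
  eq_of_forall_mul_eq_of_span hM fun j =>
    eq_of_forall_trace_mul_mul_eq_of_span hL hN fun i k => by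
      simpa only [Matrix.mul_assoc] using h i j k

theorem exists_eq_mul_of_map_mul {m' : Type*} [Fintype m] [Fintype n] [DecidableEq m]
    [DecidableEq n] [Nonempty n]
    (F : Matrix m n K →ₗ[K] Matrix m' n K) (hF : ∀ M (C : Matrix n n K), F (M * C) = F M * C) :
    ∃ Y : Matrix m' m K, ∀ M, F M = Y * M := by
  let r := Classical.arbitrary n
  refine ⟨∑ a, F (single a r 1) * single r a (1 : K), fun M => ?_⟩
  have hM : M = ∑ a, (single a r 1 : Matrix m n K) * (single r a (1 : K) * M) := by
    simp only [← Matrix.mul_assoc, single_mul_single_same, one_mul, ← Matrix.sum_mul,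
      sum_single_one, Matrix.one_mul]
  conv_lhs => rw [hM]
  simp only [map_sum, hF, Matrix.sum_mul, Matrix.mul_assoc]

-- Skolem–Noether for matrix algebras.
theorem exists_eq_mul_mul_of_algEquiv [Fintype m] [Fintype n] [DecidableEq m] [DecidableEq n]
    (f : Matrix m m K ≃ₐ[K] Matrix n n K) :
    ∃ (Z : Matrix m n K) (W : Matrix n m K), Z * W = 1 ∧ W * Z = 1 ∧ ∀ X, f X = W * X * Z := by
  obtain ⟨T, hT⟩ :=
    (toLinAlgEquiv'.symm.trans (f.trans toLinAlgEquiv')).eq_linearEquivConjAlgEquiv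
  refine ⟨LinearMap.toMatrix' T.symm, LinearMap.toMatrix' T, ?_, ?_, fun X => ?_⟩
  · rw [← LinearMap.toMatrix'_comp, T.symm_comp, LinearMap.toMatrix'_id]
  · rw [← LinearMap.toMatrix'_comp, T.comp_symm, LinearMap.toMatrix'_id]
  · apply toLinAlgEquiv'.injective
    have := congr($hT (toLinAlgEquiv' X))
    simp only [AlgEquiv.trans_apply, AlgEquiv.symm_apply_apply,
      LinearEquiv.conjAlgEquiv_apply] at this
    rw [this]
    change _ = toLin' _
    rw [toLin'_mul, toLin'_mul, toLin'_toMatrix', toLin'_toMatrix']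
    rfl

theorem card_eq_of_mul_eq_one [Fintype m] [Fintype n] [DecidableEq m] [DecidableEq n]
    {Z : Matrix m n K} {W : Matrix n m K} (hZW : Z * W = 1) (hWZ : W * Z = 1) :
    Fintype.card m = Fintype.card n := by
  refine le_antisymm ?_ ?_
  · calc Fintype.card m = (Z * W).rank := by rw [hZW, rank_one]
      _ ≤ Z.rank := rank_mul_le_left _ _
      _ ≤ Fintype.card n := rank_le_card_width _
  · calc Fintype.card n = (W * Z).rank := by rw [hWZ, rank_one]
      _ ≤ W.rank := rank_mul_le_left _ _
      _ ≤ Fintype.card m := rank_le_card_width _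

theorem exists_smul_eq_of_mul_mul_eq [Fintype m] [Fintype n] [DecidableEq m] [DecidableEq n]
    [Nonempty m] {Z Z' : Matrix m n K} {W W' : Matrix n m K}
    (hZW : Z * W = 1) (hZ'W' : Z' * W' = 1) (hW'Z' : W' * Z' = 1)
    (h : ∀ X : Matrix m m K, W * X * Z = W' * X * Z') : ∃ c : K, c ≠ 0 ∧ Z' = c • Z := by
  have hcomm : ∀ X, Commute X (Z * W') := fun X => by
    calc X * (Z * W') = Z * (W * X * Z) * W' := by
          simp only [← Matrix.mul_assoc, hZW, Matrix.one_mul]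
      _ = Z * (W' * X * Z') * W' := by rw [h]
      _ = Z * W' * X := by simp only [Matrix.mul_assoc, hZ'W', Matrix.mul_one]
  obtain ⟨c, hc⟩ := mem_range_scalar_of_commute_single fun i j _ => hcomm (single i j 1)
  have hZ : Z = c • Z' := by
    calc Z = Z * W' * Z' := by rw [Matrix.mul_assoc, hW'Z', Matrix.mul_one]
      _ = c • Z' := by
          rw [← hc, scalar_apply, ← smul_one_eq_diagonal, Matrix.smul_mul, Matrix.one_mul]
  have hc0 : c ≠ 0 := by
    rintro rfl
    rw [hZ, zero_smul, Matrix.zero_mul] at hZW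
    exact zero_ne_one hZW
  exact ⟨c⁻¹, inv_ne_zero hc0, by rw [hZ, smul_smul, inv_mul_cancel₀ hc0, one_smul]⟩

end Matrix

section GaugeTriple

variable {K : Type*} [Field K] {l m n l' m' n' : Type*} [Fintype l] [Fintype m] [Fintype n]
  [Fintype l'] [Fintype m'] [Fintype n']
  (P : Matrix l m K ≃ₗ[K] Matrix l' m' K) (Q : Matrix m n K ≃ₗ[K] Matrix m' n' K)
  (S : Matrix n l K ≃ₗ[K] Matrix n' l' K)

theorem trace_symm_mul_symm_mul_symm
    (hPQS : ∀ M₁ M₂ M₃, (P M₁ * Q M₂ * S M₃).trace = (M₁ * M₂ * M₃).trace) (N₁ N₂ N₃) :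
    (P.symm N₁ * Q.symm N₂ * S.symm N₃).trace = (N₁ * N₂ * N₃).trace := by
  rw [← hPQS]
  simp

theorem exists_map_mul_left_eq_mul [DecidableEq l'] [DecidableEq m'] [DecidableEq n']
    [Nonempty l'] [Nonempty n']
    (hPQS : ∀ M₁ M₂ M₃, (P M₁ * Q M₂ * S M₃).trace = (M₁ * M₂ * M₃).trace) (X : Matrix m m K) :
    ∃ Y : Matrix m' m' K, ∀ M, Q (X * M) = Y * Q M := by
  let F : Module.End K (Matrix m' n' K) :=
    Q.toLinearMap ∘ₗ mulLeftLinearMap n K X ∘ₗ Q.symm.toLinearMap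
  -- `X` moves across the bond onto `P`, where right multiplications of `Y` cannot reach it.
  have move : ∀ M₁ Y M₃, (P M₁ * F Y * S M₃).trace = (P (M₁ * X) * Y * S M₃).trace := by
    intro M₁ Y M₃
    rw [show F Y = Q (X * Q.symm Y) from rfl, hPQS, ← Matrix.mul_assoc, ← hPQS,
      Q.apply_symm_apply]
  have hF : ∀ Y (C : Matrix n' n' K), F (Y * C) = F Y * C := by
    intro Y C
    refine Matrix.eq_of_forall_trace_mul_mul_eq_of_span (L := P) (N := S)
      (by rw [P.surjective.range_eq, Submodule.span_univ])
      (by rw [S.surjective.range_eq, Submodule.span_univ]) fun M₁ M₃ => ?_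
    calc (P M₁ * F (Y * C) * S M₃).trace
        = (P (M₁ * X) * Y * S (S.symm (C * S M₃))).trace := by
          rw [move, S.apply_symm_apply]
          simp only [Matrix.mul_assoc]
      _ = (P M₁ * (F Y * C) * S M₃).trace := by
          rw [← move, S.apply_symm_apply]
          simp only [Matrix.mul_assoc]
  obtain ⟨Y, hY⟩ := Matrix.exists_eq_mul_of_map_mul F hF
  exact ⟨Y, fun M => by simpa [F] using hY (Q M)⟩

theorem exists_algEquiv_map_mul_left_eq_mul [DecidableEq l] [DecidableEq m] [DecidableEq n]
    [DecidableEq l'] [DecidableEq m'] [DecidableEq n'] [Nonempty l] [Nonempty n] [Nonempty l']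
    [Nonempty n'] (hPQS : ∀ M₁ M₂ M₃, (P M₁ * Q M₂ * S M₃).trace = (M₁ * M₂ * M₃).trace) :
    ∃ Ψ : Matrix m m K ≃ₐ[K] Matrix m' m' K, ∀ X M, Q (X * M) = Ψ X * Q M := by
  choose Ψ hΨ using exists_map_mul_left_eq_mul P Q S hPQS
  choose Φ hΦ using exists_map_mul_left_eq_mul P.symm Q.symm S.symm
    (trace_symm_mul_symm_mul_symm P Q S hPQS)
  have hΨ_eq {X Y} (h : ∀ M, Q (X * M) = Y * Q M) : Ψ X = Y :=
    Matrix.eq_of_forall_mul_eq fun N => by rw [← Q.apply_symm_apply N, ← hΨ, h]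
  have hΦ_eq {Y X} (h : ∀ N, Q.symm (Y * N) = X * Q.symm N) : Φ Y = X :=
    Matrix.eq_of_forall_mul_eq fun M => by rw [← Q.symm_apply_apply M, ← hΦ, h]
  refine ⟨
    { toFun := Ψ
      invFun := Φ
      left_inv X := hΦ_eq fun N => ?_
      right_inv Y := hΨ_eq fun M => ?_
      map_mul' X X' := hΨ_eq fun M => ?_
      map_add' X X' := hΨ_eq fun M => ?_
      commutes' r := hΨ_eq fun M => ?_ }, hΨ⟩
  · conv_lhs => rw [← Q.apply_symm_apply N]
    rw [← hΨ, Q.symm_apply_apply]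
  · conv_lhs => rw [← Q.symm_apply_apply M]
    rw [← hΦ, Q.apply_symm_apply]
  · rw [Matrix.mul_assoc, hΨ, hΨ, Matrix.mul_assoc]
  · rw [Matrix.add_mul, map_add, hΨ, hΨ, Matrix.add_mul]
  · simp [Algebra.algebraMap_eq_smul_one]

end GaugeTriple

section ThreeSite

variable {K : Type*} [Field K] {ι₁ ι₂ ι₃ l m n l' m' n' : Type*} [Fintype ι₂] [Fintype l]
  [Fintype m] [Fintype n] [Fintype l'] [Fintype m'] [Fintype n']
  {A₁ : ι₁ → Matrix l m K} {A₂ : ι₂ → Matrix m n K} {A₃ : ι₃ → Matrix n l K}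
  {B₁ : ι₁ → Matrix l' m' K} {B₂ : ι₂ → Matrix m' n' K} {B₃ : ι₃ → Matrix n' l' K}

theorem exists_linearEquiv_apply_eq_of_trace_mul_mul_eq [DecidableEq ι₂] [DecidableEq l]
    [DecidableEq n] [DecidableEq l'] [DecidableEq n'] [Nonempty l] [Nonempty l']
    (hA₁ : Submodule.span K (Set.range A₁) = ⊤) (hA₂ : Submodule.span K (Set.range A₂) = ⊤)
    (hA₃ : Submodule.span K (Set.range A₃) = ⊤) (hB₁ : Submodule.span K (Set.range B₁) = ⊤)
    (hB₂ : Submodule.span K (Set.range B₂) = ⊤) (hB₃ : Submodule.span K (Set.range B₃) = ⊤)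
    (h : ∀ i j k, (A₁ i * A₂ j * A₃ k).trace = (B₁ i * B₂ j * B₃ k).trace) :
    ∃ Q : Matrix m n K ≃ₗ[K] Matrix m' n' K, ∀ j, Q (A₂ j) = B₂ j := by
  refine exists_linearEquiv_apply_eq_of_ker_eq hA₂ hB₂ ?_
  ext c
  simp only [LinearMap.mem_ker, Fintype.linearCombination_apply]
  have key : ∀ i k, (A₁ i * (∑ j, c j • A₂ j) * A₃ k).trace =
      (B₁ i * (∑ j, c j • B₂ j) * B₃ k).trace := by
    intro i k
    simp [Matrix.mul_sum, Matrix.sum_mul, Matrix.trace_sum, h]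
  constructor <;> intro hc
  · exact Matrix.eq_of_forall_trace_mul_mul_eq_of_span hB₁ hB₃ fun i k => by
      rw [← key, hc]; simp
  · exact Matrix.eq_of_forall_trace_mul_mul_eq_of_span hA₁ hA₃ fun i k => by
      rw [key, hc]; simp

theorem trace_map_mul_map_mul_map_eq [Fintype ι₁] [Fintype ι₃]
    (P : Matrix l m K ≃ₗ[K] Matrix l' m' K) (Q : Matrix m n K ≃ₗ[K] Matrix m' n' K)
    (S : Matrix n l K ≃ₗ[K] Matrix n' l' K)
    (hP : ∀ i, P (A₁ i) = B₁ i) (hQ : ∀ j, Q (A₂ j) = B₂ j) (hS : ∀ k, S (A₃ k) = B₃ k)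
    (hA₁ : Submodule.span K (Set.range A₁) = ⊤) (hA₂ : Submodule.span K (Set.range A₂) = ⊤)
    (hA₃ : Submodule.span K (Set.range A₃) = ⊤)
    (h : ∀ i j k, (A₁ i * A₂ j * A₃ k).trace = (B₁ i * B₂ j * B₃ k).trace) (M₁ M₂ M₃) :
    (P M₁ * Q M₂ * S M₃).trace = (M₁ * M₂ * M₃).trace := by
  rw [span_range_eq_top_iff_surjective_fintypeLinearCombination] at hA₁ hA₂ hA₃
  obtain ⟨a, rfl⟩ := hA₁ M₁
  obtain ⟨b, rfl⟩ := hA₂ M₂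
  obtain ⟨c, rfl⟩ := hA₃ M₃
  simp [Fintype.linearCombination_apply, hP, hQ, hS, Matrix.sum_mul, Matrix.mul_sum,
    Matrix.trace_sum, h]

end ThreeSite

/-- Lemma 1, gauge on an edge: two injective three-site MPS generating the
same state admit, on the edge (1,2), equal bond dimensions and an invertible gauge `Z`,
unique up to a scalar, such that inserting `X` on one side equals inserting `Z⁻¹XZ` on
the other. -/
theorem gauge_on_edge (d₁ d₂ d₃ D₁ D₂ D₃ D₁' D₂' D₃' : ℕ)
    (hD₁ : 0 < D₁) (hD₂ : 0 < D₂) (hD₃ : 0 < D₃)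
    (hD₁' : 0 < D₁') (hD₂' : 0 < D₂') (hD₃' : 0 < D₃')
    (A₁ : Fin d₁ → Matrix (Fin D₁) (Fin D₂) ℂ)
    (A₂ : Fin d₂ → Matrix (Fin D₂) (Fin D₃) ℂ)
    (A₃ : Fin d₃ → Matrix (Fin D₃) (Fin D₁) ℂ)
    (B₁ : Fin d₁ → Matrix (Fin D₁') (Fin D₂') ℂ)
    (B₂ : Fin d₂ → Matrix (Fin D₂') (Fin D₃') ℂ)
    (B₃ : Fin d₃ → Matrix (Fin D₃') (Fin D₁') ℂ)
    (hA₁ : Function.Injective fun X : Matrix (Fin D₁) (Fin D₂) ℂ =>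
      fun i : Fin d₁ => (A₁ i * Xᵀ).trace)
    (hA₂ : Function.Injective fun X : Matrix (Fin D₂) (Fin D₃) ℂ =>
      fun j : Fin d₂ => (A₂ j * Xᵀ).trace)
    (hA₃ : Function.Injective fun X : Matrix (Fin D₃) (Fin D₁) ℂ =>
      fun k : Fin d₃ => (A₃ k * Xᵀ).trace)
    (hB₁ : Function.Injective fun X : Matrix (Fin D₁') (Fin D₂') ℂ =>
      fun i : Fin d₁ => (B₁ i * Xᵀ).trace)
    (hB₂ : Function.Injective fun X : Matrix (Fin D₂') (Fin D₃') ℂ =>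
      fun j : Fin d₂ => (B₂ j * Xᵀ).trace)
    (hB₃ : Function.Injective fun X : Matrix (Fin D₃') (Fin D₁') ℂ =>
      fun k : Fin d₃ => (B₃ k * Xᵀ).trace)
    (hstate : ∀ (i : Fin d₁) (j : Fin d₂) (k : Fin d₃),
      (A₁ i * A₂ j * A₃ k).trace = (B₁ i * B₂ j * B₃ k).trace) :
    D₂ = D₂' ∧
    ∃ (Z : Matrix (Fin D₂) (Fin D₂') ℂ) (W : Matrix (Fin D₂') (Fin D₂) ℂ),
      Z * W = 1 ∧ W * Z = 1 ∧
      (∀ (X : Matrix (Fin D₂) (Fin D₂) ℂ) (i : Fin d₁) (j : Fin d₂) (k : Fin d₃),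
        (A₁ i * X * A₂ j * A₃ k).trace = (B₁ i * (W * X * Z) * B₂ j * B₃ k).trace) ∧
      ∀ (Z' : Matrix (Fin D₂) (Fin D₂') ℂ) (W' : Matrix (Fin D₂') (Fin D₂) ℂ),
        Z' * W' = 1 → W' * Z' = 1 →
        (∀ (X : Matrix (Fin D₂) (Fin D₂) ℂ) (i : Fin d₁) (j : Fin d₂) (k : Fin d₃),
          (A₁ i * X * A₂ j * A₃ k).trace = (B₁ i * (W' * X * Z') * B₂ j * B₃ k).trace) →
        ∃ c : ℂ, c ≠ 0 ∧ Z' = c • Z := by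
  have := Fin.pos_iff_nonempty.1 hD₁
  have := Fin.pos_iff_nonempty.1 hD₂
  have := Fin.pos_iff_nonempty.1 hD₃
  have := Fin.pos_iff_nonempty.1 hD₁'
  have := Fin.pos_iff_nonempty.1 hD₂'
  have := Fin.pos_iff_nonempty.1 hD₃'
  have sA₁ := Matrix.span_range_eq_top_of_injective_trace hA₁
  have sA₂ := Matrix.span_range_eq_top_of_injective_trace hA₂
  have sA₃ := Matrix.span_range_eq_top_of_injective_trace hA₃
  have sB₁ := Matrix.span_range_eq_top_of_injective_trace hB₁
  have sB₂ := Matrix.span_range_eq_top_of_injective_trace hB₂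
  have sB₃ := Matrix.span_range_eq_top_of_injective_trace hB₃
  obtain ⟨P, hP⟩ := exists_linearEquiv_apply_eq_of_trace_mul_mul_eq sA₃ sA₁ sA₂ sB₃ sB₁ sB₂
    fun k i j => by rw [← Matrix.trace_mul_cycle, hstate, Matrix.trace_mul_cycle]
  obtain ⟨Q, hQ⟩ := exists_linearEquiv_apply_eq_of_trace_mul_mul_eq sA₁ sA₂ sA₃ sB₁ sB₂ sB₃ hstate
  obtain ⟨S, hS⟩ := exists_linearEquiv_apply_eq_of_trace_mul_mul_eq sA₂ sA₃ sA₁ sB₂ sB₃ sB₁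
    fun j k i => by rw [Matrix.trace_mul_cycle, hstate, ← Matrix.trace_mul_cycle]
  have hPQS := trace_map_mul_map_mul_map_eq P Q S hP hQ hS sA₁ sA₂ sA₃ hstate
  obtain ⟨Ψ, hΨ⟩ := exists_algEquiv_map_mul_left_eq_mul P Q S hPQS
  obtain ⟨Z, W, hZW, hWZ, hΨZW⟩ := Matrix.exists_eq_mul_mul_of_algEquiv Ψ
  have insertion : ∀ (X : Matrix (Fin D₂) (Fin D₂) ℂ) i j k,
      (A₁ i * X * A₂ j * A₃ k).trace = (B₁ i * (W * X * Z) * B₂ j * B₃ k).trace := by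
    intro X i j k
    rw [← hΨZW, ← hP, ← hQ, ← hS, Matrix.mul_assoc _ (Ψ X), ← hΨ, hPQS, Matrix.mul_assoc (A₁ i)]
  refine ⟨by simpa using Matrix.card_eq_of_mul_eq_one hZW hWZ, Z, W, hZW, hWZ, insertion,
    fun Z' W' hZ'W' hW'Z' insertion' => Matrix.exists_smul_eq_of_mul_mul_eq hZW hZ'W' hW'Z'
      fun X => Matrix.eq_of_forall_trace_mul_mul_mul_eq_of_span sB₁ sB₂ sB₃ fun i j k => ?_⟩
  rw [← insertion, insertion']
end

section
/- Lemma 2 (equality of tensors): Let A₁,A₂ and B₁,B₂ be injective MPS tensors on a ring of two sites such that for all matrices X and all matrices Y: ∑Tr(A₁^i X A₂^j)|ij⟩ = ∑Tr(B₁^i X B₂^j)|ij⟩ and ∑Tr(Y A₁^i A₂^j)|ij⟩ = ∑Tr(Y B₁^i B₂^j)|ij⟩. Then there exists a nonzero scalar λ such that A₁^i = λ B₁^i for all i and A₂^j = λ⁻¹ B₂^j for all j. -/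
/-!
The hypotheses on `X` and `Y` say exactly that `A₂ʲ A₁ⁱ = B₂ʲ B₁ⁱ` and `A₁ⁱ A₂ʲ = B₁ⁱ B₂ʲ`.
Combining them, `A₁ⁱ B₂ʲ B₁ⁱ' = A₁ⁱ A₂ʲ A₁ⁱ' = B₁ⁱ B₂ʲ A₁ⁱ'`. The `B₂ʲ` span all matrices
(injectivity of `X ↦ (Tr(B₂ʲ Xᵀ))ⱼ` says exactly this), so `B₂ʲ` may be replaced by any `Z`;
a matrix unit `Z` gives `A₁ⁱ ⊗ B₁ⁱ' = B₁ⁱ ⊗ A₁ⁱ'`, hence `A₁ = λ B₁`. Then `B₁ⁱ (λ A₂ʲ - B₂ʲ) = 0`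
for all `i`, and since the `B₁ⁱ` span, `λ A₂ʲ = B₂ʲ`; so `λ ≠ 0` because the `B₂ʲ` span.
-/

open Matrix Submodule Set

namespace Matrix

variable {K ι l m n p : Type*} [Field K]

theorem trace_mul_transpose_of_apply_single [Fintype m] [Fintype n] [DecidableEq m]
    [DecidableEq n] (f : Matrix m n K →ₗ[K] K) (C : Matrix m n K) :
    (C * (of fun a b => f (single a b 1))ᵀ).trace = f C := by
  suffices traceLinearMap m K K ∘ₗ mulRightLinearMap m K (of fun a b => f (single a b 1))ᵀ = f from
    LinearMap.congr_fun this C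
  refine ext_linearMap K fun a b => LinearMap.ext_ring ?_
  simp [trace_single_mul]

theorem span_range_eq_top_of_injective_trace_mul_transpose [Fintype m] [Fintype n]
    [DecidableEq m] [DecidableEq n] {A : ι → Matrix m n K}
    (hA : Function.Injective fun X : Matrix m n K => fun i => (A i * Xᵀ).trace) :
    span K (range A) = ⊤ := by
  by_contra hne
  obtain ⟨f, hf, hle⟩ := (span K (range A)).exists_le_ker_of_lt_top (lt_top_iff_ne_top.2 hne)
  have hX : (of fun a b => f (single a b 1)) = 0 := hA <| funext fun i => by
    simp only [trace_mul_transpose_of_apply_single, transpose_zero, Matrix.mul_zero, trace_zero]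
    exact hle (subset_span ⟨i, rfl⟩)
  exact hf <| LinearMap.ext fun C => by
    rw [← trace_mul_transpose_of_apply_single, hX]
    simp

theorem exists_apply_ne_zero_of_span_range_eq_top [Nonempty m] [Nonempty n]
    {A : ι → Matrix m n K} (hA : span K (range A) = ⊤) : ∃ i a b, A i a b ≠ 0 := by
  by_contra! h
  have hbot : span K (range A) = ⊥ := span_eq_bot.2 <| by
    rintro _ ⟨i, rfl⟩
    exact ext (h i)
  exact bot_ne_top (hbot.symm.trans hA)

theorem mul_mul_eq_of_span_range_eq_top [Fintype m] [Fintype n] {B : ι → Matrix m n K}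
    (hB : span K (range B) = ⊤) {P P' : Matrix l m K} {Q Q' : Matrix n p K}
    (h : ∀ j, P * B j * Q = P' * B j * Q') (Z : Matrix m n K) : P * Z * Q = P' * Z * Q' :=
  LinearMap.congr_fun (LinearMap.ext_on_range
    (f := mulRightLinearMap l K Q ∘ₗ mulLeftLinearMap n K P)
    (g := mulRightLinearMap l K Q' ∘ₗ mulLeftLinearMap n K P') hB h) Z

theorem apply_mul_apply_eq_of_forall_mul_mul_eq [Fintype m] [Fintype n] [DecidableEq m]
    [DecidableEq n] {P P' : Matrix l m K} {Q Q' : Matrix n p K}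
    (h : ∀ Z : Matrix m n K, P * Z * Q = P' * Z * Q') (a : l) (b : m) (c : n) (d : p) :
    P a b * Q c d = P' a b * Q' c d := by
  simpa [mul_apply, single, ite_and] using congr_fun₂ (h (single b c 1)) a d

theorem eq_of_forall_mul_eq_mul_of_span_range_eq_top [Fintype m] [Fintype n]
    [DecidableEq m] [DecidableEq n] [Nonempty m] {B : ι → Matrix m n K}
    (hB : span K (range B) = ⊤) {W W' : Matrix n p K} (h : ∀ i, B i * W = B i * W') :
    W = W' := by
  ext c d
  obtain ⟨a⟩ := ‹Nonempty m›
  have hmul := mul_mul_eq_of_span_range_eq_top hB (P := (1 : Matrix m m K)) (P' := 1)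
    (Q := W) (Q' := W') (by simpa only [Matrix.one_mul] using h)
  simpa using apply_mul_apply_eq_of_forall_mul_mul_eq hmul a a c d

theorem exists_smul_eq_of_apply_mul_apply_comm {A B : ι → Matrix m n K} {i₀ : ι} {c : m} {d : n}
    (hB : B i₀ c d ≠ 0) (h : ∀ i a b, A i a b * B i₀ c d = B i a b * A i₀ c d) :
    ∃ μ : K, ∀ i, A i = μ • B i :=
  ⟨A i₀ c d / B i₀ c d, fun i => ext fun a b => by
    rw [Matrix.smul_apply, smul_eq_mul, div_mul_eq_mul_div, eq_div_iff hB, h, mul_comm]⟩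

end Matrix

theorem equal_tensors_of_equal_insertions_general (d₁ d₂ D₁ D₂ : ℕ)
    (A₁ B₁ : Fin d₁ → Matrix (Fin D₁) (Fin D₂) ℂ)
    (A₂ B₂ : Fin d₂ → Matrix (Fin D₂) (Fin D₁) ℂ)
    (hB₁ : Function.Injective fun X : Matrix (Fin D₁) (Fin D₂) ℂ =>
      fun i : Fin d₁ => (B₁ i * Xᵀ).trace)
    (hB₂ : Function.Injective fun X : Matrix (Fin D₂) (Fin D₁) ℂ =>
      fun j : Fin d₂ => (B₂ j * Xᵀ).trace)
    (hX : ∀ (X : Matrix (Fin D₂) (Fin D₂) ℂ) (i : Fin d₁) (j : Fin d₂),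
      (A₁ i * X * A₂ j).trace = (B₁ i * X * B₂ j).trace)
    (hY : ∀ (Y : Matrix (Fin D₁) (Fin D₁) ℂ) (i : Fin d₁) (j : Fin d₂),
      (Y * A₁ i * A₂ j).trace = (Y * B₁ i * B₂ j).trace) :
    ∃ lam : ℂ, lam ≠ 0 ∧ (∀ i, A₁ i = lam • B₁ i) ∧ (∀ j, A₂ j = lam⁻¹ • B₂ j) := by
  rcases isEmpty_or_nonempty (Fin D₁) with _ | _
  · exact ⟨1, one_ne_zero, fun _ => Subsingleton.elim _ _, fun _ => Subsingleton.elim _ _⟩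
  rcases isEmpty_or_nonempty (Fin D₂) with _ | _
  · exact ⟨1, one_ne_zero, fun _ => Subsingleton.elim _ _, fun _ => Subsingleton.elim _ _⟩
  have hspan₁ := span_range_eq_top_of_injective_trace_mul_transpose hB₁
  have hspan₂ := span_range_eq_top_of_injective_trace_mul_transpose hB₂
  have hmul₁₂ : ∀ i j, A₁ i * A₂ j = B₁ i * B₂ j := fun i j =>
    ext_iff_trace_mul_left.2 fun Y => by simpa only [Matrix.mul_assoc] using hY Y i j
  have hmul₂₁ : ∀ i j, A₂ j * A₁ i = B₂ j * B₁ i := fun i j =>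
    ext_iff_trace_mul_right.2 fun X =>
      (trace_mul_cycle _ _ _).symm.trans ((hX X i j).trans (trace_mul_cycle _ _ _))
  have hswap : ∀ i i' (Z : Matrix (Fin D₂) (Fin D₁) ℂ),
      A₁ i * Z * B₁ i' = B₁ i * Z * A₁ i' := fun i i' =>
    mul_mul_eq_of_span_range_eq_top hspan₂ fun j => by
      rw [Matrix.mul_assoc, ← hmul₂₁, ← Matrix.mul_assoc, hmul₁₂]
  obtain ⟨i₀, c, d, hB₁₀⟩ := exists_apply_ne_zero_of_span_range_eq_top hspan₁
  obtain ⟨lam, hlam⟩ := exists_smul_eq_of_apply_mul_apply_comm hB₁₀ fun i a b =>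
    apply_mul_apply_eq_of_forall_mul_mul_eq (hswap i i₀) a b c d
  have hB₂_eq : ∀ j, lam • A₂ j = B₂ j := fun j =>
    eq_of_forall_mul_eq_mul_of_span_range_eq_top hspan₁ fun i => by
      rw [Matrix.mul_smul, ← Matrix.smul_mul, ← hlam, hmul₁₂]
  have hlam₀ : lam ≠ 0 := by
    rintro rfl
    obtain ⟨j, a, b, hj⟩ := exists_apply_ne_zero_of_span_range_eq_top hspan₂
    simp [← hB₂_eq j] at hj
  exact ⟨lam, hlam₀, hlam, fun j => by rw [← hB₂_eq, smul_smul, inv_mul_cancel₀ hlam₀, one_smul]⟩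

/-- Lemma 2: two two-site injective MPS that agree under all insertions on
both bonds have proportional tensors, with reciprocal proportionality constants. -/
theorem equal_tensors_of_equal_insertions (d₁ d₂ D₁ D₂ : ℕ)
    (A₁ B₁ : Fin d₁ → Matrix (Fin D₁) (Fin D₂) ℂ)
    (A₂ B₂ : Fin d₂ → Matrix (Fin D₂) (Fin D₁) ℂ)
    (hA₁ : Function.Injective fun X : Matrix (Fin D₁) (Fin D₂) ℂ =>
      fun i : Fin d₁ => (A₁ i * Xᵀ).trace)
    (hA₂ : Function.Injective fun X : Matrix (Fin D₂) (Fin D₁) ℂ =>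
      fun j : Fin d₂ => (A₂ j * Xᵀ).trace)
    (hB₁ : Function.Injective fun X : Matrix (Fin D₁) (Fin D₂) ℂ =>
      fun i : Fin d₁ => (B₁ i * Xᵀ).trace)
    (hB₂ : Function.Injective fun X : Matrix (Fin D₂) (Fin D₁) ℂ =>
      fun j : Fin d₂ => (B₂ j * Xᵀ).trace)
    (hX : ∀ (X : Matrix (Fin D₂) (Fin D₂) ℂ) (i : Fin d₁) (j : Fin d₂),
      (A₁ i * X * A₂ j).trace = (B₁ i * X * B₂ j).trace)
    (hY : ∀ (Y : Matrix (Fin D₁) (Fin D₁) ℂ) (i : Fin d₁) (j : Fin d₂),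
      (Y * A₁ i * A₂ j).trace = (Y * B₁ i * B₂ j).trace) :
    ∃ lam : ℂ, lam ≠ 0 ∧ (∀ i, A₁ i = lam • B₁ i) ∧ (∀ j, A₂ j = lam⁻¹ • B₂ j) :=
  equal_tensors_of_equal_insertions_general d₁ d₂ D₁ D₂ A₁ B₁ A₂ B₂ hB₁ hB₂ hX hY
end

section
/- If the matrices A^i ∈ Mat(D₁×D₂) form an injective tensor, and B^i ∈ Mat(D₁×D₂) are matrices such that A^i = B^i Z for all i and A^i = W B^i for all i, where Z ∈ Mat(D₂), W ∈ Mat(D₁), and B is injective, then Z = λ·Id, W = λ·Id for some scalar λ, and hence A^i = λ B^i for all i. -/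
open Matrix

/-!
Injectivity of `B` lets one move the gauge off the tensor: `B i * Z = W * B i` for all `i` forces
`Y * Zᵀ = Wᵀ * Y` for every matrix `Y`, by cyclicity of the trace. Testing this against the matrix
units `single k l 1` shows that `Zᵀ` and `Wᵀ` are diagonal with one common diagonal entry.
-/

namespace Matrix

variable {ι m n R : Type*} [Fintype m] [Fintype n]

def IsInjectiveTensor [CommSemiring R] (B : ι → Matrix m n R) : Prop :=
  Function.Injective fun X : Matrix m n R => fun i => (B i * Xᵀ).trace

theorem IsInjectiveTensor.mul_transpose_eq_transpose_mul [CommSemiring R]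
    {B : ι → Matrix m n R} (hB : IsInjectiveTensor B) {Z : Matrix n n R} {W : Matrix m m R}
    (hBZW : ∀ i, B i * Z = W * B i) (Y : Matrix m n R) : Y * Zᵀ = Wᵀ * Y := by
  apply hB
  funext i
  calc (B i * (Y * Zᵀ)ᵀ).trace
      = (B i * Z * Yᵀ).trace := by rw [transpose_mul, transpose_transpose, Matrix.mul_assoc]
    _ = (W * (B i * Yᵀ)).trace := by rw [hBZW i, Matrix.mul_assoc]
    _ = (B i * Yᵀ * W).trace := trace_mul_comm _ _
    _ = (B i * (Wᵀ * Y)ᵀ).trace := by rw [transpose_mul, transpose_transpose, Matrix.mul_assoc]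

variable [DecidableEq m] [DecidableEq n] [NonAssocSemiring R]

theorem exists_eq_smul_one_of_forall_mul_eq_mul [Nonempty m] [Nonempty n]
    {Z : Matrix n n R} {W : Matrix m m R} (h : ∀ Y : Matrix m n R, Y * Z = W * Y) :
    ∃ c : R, Z = c • (1 : Matrix n n R) ∧ W = c • (1 : Matrix m m R) := by
  have entry (k p : m) (l q : n) :
      (single k l (1 : R) * Z) p q = (W * single k l (1 : R)) p q :=
    congrFun (congrFun (h (single k l 1)) p) q
  have hZ_diag (k : m) (l : n) : Z l l = W k k := by simpa using entry k k l l
  have hZ_off (k : m) {l q : n} (hql : q ≠ l) : Z l q = 0 := by simpa [hql] using entry k k l q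
  have hW_off (l : n) {k p : m} (hpk : p ≠ k) : W p k = 0 := by simpa [hpk] using (entry k p l l).symm
  obtain ⟨k₀⟩ := ‹Nonempty m›
  obtain ⟨l₀⟩ := ‹Nonempty n›
  refine ⟨W k₀ k₀, ?_, ?_⟩
  · ext l q
    rcases eq_or_ne l q with rfl | hlq
    · simp [hZ_diag k₀]
    · simp [hZ_off k₀ hlq.symm, hlq]
  · ext p k
    rcases eq_or_ne p k with rfl | hpk
    · simp [← hZ_diag p l₀, hZ_diag k₀ l₀]
    · simp [hW_off l₀ hpk, hpk]

end Matrix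

theorem two_sided_gauge_is_scalar_general (d D₁ D₂ : ℕ) (hD₁ : 0 < D₁) (hD₂ : 0 < D₂)
    (A B : Fin d → Matrix (Fin D₁) (Fin D₂) ℂ)
    (hB : Function.Injective fun X : Matrix (Fin D₁) (Fin D₂) ℂ =>
      fun i : Fin d => (B i * Xᵀ).trace)
    (Z : Matrix (Fin D₂) (Fin D₂) ℂ) (W : Matrix (Fin D₁) (Fin D₁) ℂ)
    (h₁ : ∀ i, A i = B i * Z) (h₂ : ∀ i, A i = W * B i) :
    ∃ lam : ℂ, Z = lam • (1 : Matrix (Fin D₂) (Fin D₂) ℂ) ∧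
      W = lam • (1 : Matrix (Fin D₁) (Fin D₁) ℂ) ∧ ∀ i, A i = lam • B i := by
  have : Nonempty (Fin D₁) := ⟨⟨0, hD₁⟩⟩
  have : Nonempty (Fin D₂) := ⟨⟨0, hD₂⟩⟩
  have hB' : IsInjectiveTensor B := hB
  obtain ⟨lam, hZ, hW⟩ := exists_eq_smul_one_of_forall_mul_eq_mul
    (hB'.mul_transpose_eq_transpose_mul fun i => (h₁ i).symm.trans (h₂ i))
  have hZ : Z = lam • 1 := by simpa using congrArg transpose hZ
  refine ⟨lam, hZ, by simpa using congrArg transpose hW, fun i => ?_⟩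
  rw [h₁ i, hZ, Matrix.mul_smul, Matrix.mul_one]

/-- a two-sided gauge acting trivially between two injective tensors is a
scalar. -/
theorem two_sided_gauge_is_scalar (d D₁ D₂ : ℕ) (hD₁ : 0 < D₁) (hD₂ : 0 < D₂)
    (A B : Fin d → Matrix (Fin D₁) (Fin D₂) ℂ)
    (hA : Function.Injective fun X : Matrix (Fin D₁) (Fin D₂) ℂ =>
      fun i : Fin d => (A i * Xᵀ).trace)
    (hB : Function.Injective fun X : Matrix (Fin D₁) (Fin D₂) ℂ =>
      fun i : Fin d => (B i * Xᵀ).trace)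
    (Z : Matrix (Fin D₂) (Fin D₂) ℂ) (W : Matrix (Fin D₁) (Fin D₁) ℂ)
    (h₁ : ∀ i, A i = B i * Z) (h₂ : ∀ i, A i = W * B i) :
    ∃ lam : ℂ, Z = lam • (1 : Matrix (Fin D₂) (Fin D₂) ℂ) ∧
      W = lam • (1 : Matrix (Fin D₁) (Fin D₁) ℂ) ∧ ∀ i, A i = lam • B i :=
  two_sided_gauge_is_scalar_general d D₁ D₂ hD₁ hD₂ A B hB Z W h₁ h₂
end

section
/- Union of injective regions lemma (four-tensor form): Consider four tensors T₁ (region A∖B), T₂ (region A∩B), T₃ (region B∖A), T₄ (complement), contracted pairwise along virtual edges into a closed network. If the tensor obtained by contracting T₁ and T₂ (region A) is injective as a map from its remaining virtual indices to its physical indices, and likewise the contraction of T₂ and T₃ (region B) is injective, then the contraction of T₁, T₂ and T₃ (region A∪B) is injective. -/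
/-- union of two injective regions is injective (four-tensor form; the
complement tensor plays no role in the conclusion).  `T₁, T₂, T₃` are the tensors of the
regions `A∖B`, `A∩B`, `B∖A`, contracted pairwise along the virtual edges `e_{kl}`. -/
theorem union_of_injective_regions (p₁ p₂ p₃ e12 e13 e14 e23 e24 e34 : ℕ)
    (he12 : 0 < e12) (he13 : 0 < e13) (he14 : 0 < e14)
    (he23 : 0 < e23) (he24 : 0 < e24) (he34 : 0 < e34)
    (T₁ : Fin p₁ → Fin e12 → Fin e13 → Fin e14 → ℂ)
    (T₂ : Fin p₂ → Fin e12 → Fin e23 → Fin e24 → ℂ)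
    (T₃ : Fin p₃ → Fin e13 → Fin e23 → Fin e34 → ℂ)
    -- region A = T₁ contracted with T₂ along e12 is injective:
    (hA : Function.Injective fun v : Fin e13 → Fin e14 → Fin e23 → Fin e24 → ℂ =>
      fun ip : Fin p₁ × Fin p₂ =>
        ∑ a12, ∑ a13, ∑ a14, ∑ a23, ∑ a24,
          T₁ ip.1 a12 a13 a14 * T₂ ip.2 a12 a23 a24 * v a13 a14 a23 a24)
    -- region B = T₂ contracted with T₃ along e23 is injective:
    (hB : Function.Injective fun v : Fin e12 → Fin e24 → Fin e13 → Fin e34 → ℂ =>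
      fun jp : Fin p₂ × Fin p₃ =>
        ∑ a12, ∑ a13, ∑ a23, ∑ a24, ∑ a34,
          T₂ jp.1 a12 a23 a24 * T₃ jp.2 a13 a23 a34 * v a12 a24 a13 a34) :
    -- region A ∪ B = T₁, T₂, T₃ contracted along e12, e23, e13 is injective:
    Function.Injective fun v : Fin e14 → Fin e24 → Fin e34 → ℂ =>
      fun q : Fin p₁ × Fin p₂ × Fin p₃ =>
        ∑ a12, ∑ a13, ∑ a14, ∑ a23, ∑ a24, ∑ a34,
          T₁ q.1 a12 a13 a14 * T₂ q.2.1 a12 a23 a24 * T₃ q.2.2 a13 a23 a34 *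
            v a14 a24 a34 := by
  intro v v' h
  -- Step 1: use injectivity of region A for each fixed p₃.
  have key : ∀ (q3 : Fin p₃) (a13 : Fin e13) (a14 : Fin e14) (a23 : Fin e23) (a24 : Fin e24),
      (∑ a34, T₃ q3 a13 a23 a34 * v a14 a24 a34)
        = ∑ a34, T₃ q3 a13 a23 a34 * v' a14 a24 a34 := by
    intro q3
    have hw : (fun (a13 : Fin e13) (a14 : Fin e14) (a23 : Fin e23) (a24 : Fin e24) =>
          ∑ a34, T₃ q3 a13 a23 a34 * v a14 a24 a34)
        = (fun a13 a14 a23 a24 => ∑ a34, T₃ q3 a13 a23 a34 * v' a14 a24 a34) := by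
      apply hA
      funext ip
      have := congrFun h (ip.1, ip.2, q3)
      simpa [Finset.mul_sum, mul_assoc] using this
    intro a13 a14 a23 a24
    exact congrFun (congrFun (congrFun (congrFun hw a13) a14) a23) a24
  -- Step 2: use injectivity of region B for each fixed a14.
  funext a14 a24 a34
  have hu : (fun (_ : Fin e12) (a24 : Fin e24) (_ : Fin e13) (a34 : Fin e34) =>
        v a14 a24 a34)
      = (fun _ a24 _ a34 => v' a14 a24 a34) := by
    apply hB
    funext jp
    simp only
    refine Finset.sum_congr rfl fun a12 _ => ?_
    refine Finset.sum_congr rfl fun a13 _ => ?_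
    refine Finset.sum_congr rfl fun a23 _ => ?_
    refine Finset.sum_congr rfl fun b24 _ => ?_
    calc (∑ b34, T₂ jp.1 a12 a23 b24 * T₃ jp.2 a13 a23 b34 * v a14 b24 b34)
        = T₂ jp.1 a12 a23 b24 * ∑ b34, T₃ jp.2 a13 a23 b34 * v a14 b24 b34 := by
          rw [Finset.mul_sum]; simp [mul_assoc]
      _ = T₂ jp.1 a12 a23 b24 * ∑ b34, T₃ jp.2 a13 a23 b34 * v' a14 b24 b34 := by
          rw [key]
      _ = ∑ b34, T₂ jp.1 a12 a23 b24 * T₃ jp.2 a13 a23 b34 * v' a14 b24 b34 := by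
          rw [Finset.mul_sum]; simp [mul_assoc]
  exact congrFun (congrFun (congrFun (congrFun hu ⟨0, he12⟩) a24) ⟨0, he13⟩) a34
end

section
/- Fundamental Theorem for normal translationally invariant MPS: Let A and B be MPS tensors with matrices in Mat(D), Mat(D') such that blocking L consecutive sites of either yields an injective tensor (i.e. X ↦ (Tr(A^{i₁}⋯A^{i_L} X^T)) is injective, and similarly for B). If they generate the same state on n ≥ 3L sites, then D = D' and there exist an invertible matrix Z and a scalar λ with λⁿ = 1 such that B^i = λ Z⁻¹ A^i Z for all i; Z is unique up to a multiplicative constant. -/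
/-!
Normality makes the products `A^w` of the words `w` of any length `m ≥ L` span `Mat(D)`. Since
`Tr(A^u A^v) = Tr(B^u B^v)` whenever `|u| + |v| = n`, and the `B`-words of length `n - m` pair
nondegenerately with `Mat(D')` through the trace, every linear relation among the `A`-words of
length `m` is also one among the `B`-words: for `L ≤ m ≤ n - L` there is a linear map `θ_m` sending
`A^w` to `B^w`. Comparing `θ_{2L}` with `θ_L` shows that `θ_L` is a nonzero multiple of an algebra
isomorphism, hence `D = D'` and, by Skolem–Noether, `θ_L` is a multiple of `X ↦ U X U⁻¹`. The map
`θ_{L+1}` then forces `B^i ∝ U A^i U⁻¹`, and comparing traces on `n` sites gives `λⁿ = 1`. Two such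
gauges differ by a matrix that commutes with every `A`-word of length `L` up to a scalar; as these
words span `Mat(D)`, it is a multiple of the identity.
-/

open Matrix Submodule

lemma exists_linearMap_apply_eq {K κ V W : Type*} [Field K] [Fintype κ] [AddCommGroup V]
    [Module K V] [AddCommGroup W] [Module K W] {v : κ → V} (w : κ → W)
    (hv : span K (Set.range v) = ⊤) (h : ∀ c : κ → K, ∑ k, c k • v k = 0 → ∑ k, c k • w k = 0) :
    ∃ θ : V →ₗ[K] W, ∀ k, θ (v k) = w k := by
  classical
  obtain ⟨g, hg⟩ := (Fintype.linearCombination K v).exists_rightInverse_of_surjective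
    (by rw [Fintype.range_linearCombination, hv])
  refine ⟨Fintype.linearCombination K w ∘ₗ g, fun k => ?_⟩
  have hk := h (g (v k) - Pi.single k 1) <| by
    simpa [Fintype.linearCombination_apply, sub_smul, Finset.sum_sub_distrib, Pi.single_apply]
      using sub_eq_zero.2 (LinearMap.congr_fun hg (v k))
  simpa [Fintype.linearCombination_apply, sub_smul, Finset.sum_sub_distrib, Pi.single_apply,
    sub_eq_zero] using hk

namespace Matrix

variable {K : Type*} [Field K] {n : Type*} [Fintype n]

lemma card_eq_of_linearEquiv {n' : Type*} [Fintype n'] (e : Matrix n n K ≃ₗ[K] Matrix n' n' K) :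
    Fintype.card n = Fintype.card n' := by
  have := e.finrank_eq
  simp only [Module.finrank_matrix, Module.finrank_self, mul_one] at this
  exact Nat.mul_self_inj.1 this

variable [DecidableEq n]

lemma exists_eq_trace_mul (f : Module.Dual K (Matrix n n K)) :
    ∃ N : Matrix n n K, ∀ X, f X = (X * N).trace := by
  refine ⟨.of fun i j => f (single j i 1), fun X => ?_⟩
  induction X using Matrix.induction_on' with
  | h_zero => simp
  | h_add p q hp hq => simp [hp, hq, add_mul]
  | h_std_basis i j x =>
    rw [trace_single_mul, of_apply, ← map_smul, smul_single, smul_eq_mul, mul_one]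

lemma span_eq_top_of_injective_trace_mul_transpose {κ : Type*} {v : κ → Matrix n n K}
    (hv : Function.Injective fun X : Matrix n n K => fun k => (v k * Xᵀ).trace) :
    span K (Set.range v) = ⊤ := by
  by_contra hne
  obtain ⟨f, hf0, hf⟩ := exists_dual_map_eq_bot_of_lt_top (lt_top_iff_ne_top.2 hne) inferInstance
  obtain ⟨N, hN⟩ := exists_eq_trace_mul f
  have hvN : ∀ k, (v k * N).trace = 0 := fun k => by
    rw [← hN, ← mem_bot K, ← hf]
    exact mem_map_of_mem (subset_span ⟨k, rfl⟩)
  have : Nᵀ = 0 := hv (funext fun k => by simpa using hvN k)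
  exact hf0 (LinearMap.ext fun X => by simp [hN, transpose_eq_zero.1 this])

lemma eq_zero_of_forall_trace_mul_eq_zero {κ : Type*} {v : κ → Matrix n n K}
    (hv : span K (Set.range v) = ⊤) {M : Matrix n n K} (h : ∀ k, (v k * M).trace = 0) : M = 0 := by
  have : traceLinearMap n K K ∘ₗ LinearMap.mulRight K M = 0 :=
    LinearMap.ext_on_range hv (by simpa using h)
  exact ext_iff_trace_mul_left.2 fun X => by simpa using LinearMap.congr_fun this X

lemma exists_eq_smul_one_of_forall_commute {M : Matrix n n K} (h : ∀ X, Commute X M) :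
    ∃ c : K, M = c • 1 := by
  obtain ⟨c, hc⟩ := mem_range_scalar_iff_commute_single'.2 fun i j => h (single i j 1)
  exact ⟨c, by rw [← hc, smul_one_eq_diagonal]; rfl⟩

lemma mul_single_one_mul_apply (X Y : Matrix n n K) (a b c d : n) :
    (X * single b c (1 : K) * Y) a d = X a b * Y c d := by
  simp [Matrix.mul_apply, single, ite_and]

lemma exists_eq_smul_of_mul_mul_eq {κ : Type*} {X Y : κ → Matrix n n K}
    (h : ∀ i j M, X i * M * Y j = Y i * M * X j) {i₀ : κ} (hX : X i₀ ≠ 0) :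
    ∃ c : K, ∀ i, Y i = c • X i := by
  obtain ⟨a, b, hab⟩ : ∃ a b, X i₀ a b ≠ 0 := by
    by_contra! h0
    exact hX (Matrix.ext h0)
  refine ⟨Y i₀ a b / X i₀ a b, fun j => Matrix.ext fun p q => ?_⟩
  have := congr_fun₂ (h i₀ j (single b p (1 : K))) a q
  rw [mul_single_one_mul_apply, mul_single_one_mul_apply] at this
  rw [Matrix.smul_apply, smul_eq_mul, div_mul_eq_mul_div, eq_div_iff hab]
  linear_combination this

lemma exists_mulVec_eq {v : n → K} (hv : v ≠ 0) (u : n → K) : ∃ X : Matrix n n K, X *ᵥ v = u := by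
  obtain ⟨t, ht⟩ : ∃ t, v t ≠ 0 := Function.ne_iff.1 hv
  exact ⟨vecMulVec u (Pi.single t (v t)⁻¹), by simp [vecMulVec_mulVec, ht]⟩

lemma exists_intertwiner [Nonempty n] (ψ : Matrix n n K →ₐ[K] Matrix n n K)
    (hψ : Function.Injective ψ) : ∃ Z : Matrix n n K, Z ≠ 0 ∧ ∀ X, ψ X * Z = Z * X := by
  obtain ⟨z⟩ := ‹Nonempty n›
  obtain ⟨a, b, hab⟩ : ∃ a b, ψ (single z z 1) a b ≠ 0 := by
    by_contra! h0
    have := hψ ((Matrix.ext h0).trans (map_zero ψ).symm)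
    simpa using congr_fun₂ this z z
  set Z : Matrix n n K := .of fun r k => ψ (single k z 1) r b
  refine ⟨Z, fun h => hab (by simpa [Z] using congr_fun₂ h a z), fun X => ?_⟩
  induction X using Matrix.induction_on' with
  | h_zero => simp
  | h_add p q hp hq => rw [map_add, add_mul, hp, hq, mul_add]
  | h_std_basis i j x =>
    ext r k
    have hl : (ψ (single i j x) * Z) r k = ψ (single i j x * single k z 1) r b := by
      simp [Z, map_mul, mul_apply]
    rw [hl]
    by_cases hjk : j = k
    · subst hjk
      rw [single_mul_single_same, mul_single_apply_same, mul_one, ← mul_one x, ← smul_eq_mul,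
        ← smul_single, map_smul]
      simp [Z, mul_comm]
    · rw [single_mul_single_of_ne (h := hjk), map_zero,
        mul_single_apply_of_ne x i j r k (Ne.symm hjk)]
      rfl

/-- The Skolem–Noether theorem for matrix algebras. -/
theorem exists_units_algEquiv_apply_eq (ψ : Matrix n n K ≃ₐ[K] Matrix n n K) :
    ∃ U : (Matrix n n K)ˣ, ∀ X, ψ X = U * X * U⁻¹ := by
  cases isEmpty_or_nonempty n
  · exact ⟨1, fun X => Subsingleton.elim _ _⟩
  obtain ⟨Z, hZ0, hZ⟩ := exists_intertwiner (ψ : Matrix n n K →ₐ[K] Matrix n n K) ψ.injective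
  -- the kernel of `Z` is invariant under every matrix, so it is trivial
  have hZu : IsUnit Z := by
    refine mulVec_injective_iff_isUnit.1 ((injective_iff_map_eq_zero Z.mulVecLin).2 fun v hv => ?_)
    by_contra hv0
    refine hZ0 (Matrix.toLin'.injective (LinearMap.ext fun u => ?_))
    obtain ⟨X, rfl⟩ := exists_mulVec_eq hv0 u
    have hv' : Z *ᵥ v = 0 := hv
    rw [toLin'_apply, toLin'_apply, zero_mulVec, mulVec_mulVec, ← hZ, ← mulVec_mulVec, hv',
      mulVec_zero]
  refine ⟨hZu.unit, fun X => ?_⟩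
  rw [IsUnit.unit_spec, ← hZ, mul_assoc, IsUnit.mul_val_inv, mul_one]
  rfl

end Matrix

namespace MPS

variable {ι : Type*}

section Words

variable {M : Type*} [Monoid M] (A : ι → M)

def wordProd {m : ℕ} (w : Fin m → ι) : M := (List.ofFn fun k => A (w k)).prod

@[simp]
lemma wordProd_zero (w : Fin 0 → ι) : wordProd A w = 1 := by
  simp [wordProd]

lemma wordProd_cons {m : ℕ} (i : ι) (w : Fin m → ι) :
    wordProd A (Fin.cons i w) = A i * wordProd A w := by
  simp [wordProd, List.ofFn_succ]

@[simp]
lemma wordProd_fin_one (w : Fin 1 → ι) : wordProd A w = A (w 0) := by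
  simp [wordProd]

lemma wordProd_append {a b : ℕ} (u : Fin a → ι) (v : Fin b → ι) :
    wordProd A (Fin.append u v) = wordProd A u * wordProd A v := by
  simp [wordProd, List.ofFn_add, Fin.append_right]

end Words

section Algebra

variable (K : Type*) [Field K] {R S : Type*} [Ring R] [Algebra K R] [Ring S] [Algebra K S]

/-- Normality of `A` at length `L` is encoded as `wordSpan K A L = ⊤`; for matrices it follows from
the injectivity of the blocked tensor by `Matrix.span_eq_top_of_injective_trace_mul_transpose`. -/
def wordSpan (A : ι → R) (m : ℕ) : Submodule K R :=
  span K (Set.range fun w : Fin m → ι => wordProd A w)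

variable {K}

lemma wordSpan_add (A : ι → R) (a b : ℕ) :
    wordSpan K A (a + b) = wordSpan K A a * wordSpan K A b := by
  rw [wordSpan, wordSpan, wordSpan, span_mul_span]
  congr 1
  ext x
  constructor
  · rintro ⟨w, rfl⟩
    refine ⟨_, ⟨fun i => w (Fin.castAdd b i), rfl⟩, _, ⟨fun i => w (Fin.natAdd a i), rfl⟩, ?_⟩
    dsimp only
    rw [← wordProd_append, Fin.append_castAdd_natAdd]
  · rintro ⟨_, ⟨u, rfl⟩, _, ⟨v, rfl⟩, rfl⟩
    exact ⟨Fin.append u v, wordProd_append A u v⟩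

lemma wordSpan_eq_top_of_le {A : ι → R} {L m : ℕ} (hL : 1 ≤ L) (hA : wordSpan K A L = ⊤)
    (hm : L ≤ m) : wordSpan K A m = ⊤ := by
  obtain ⟨k, rfl⟩ := Nat.exists_eq_add_of_le' hL
  induction m, hm using Nat.le_induction with
  | base => exact hA
  | succ m _ ih =>
    rw [wordSpan_add, ih, eq_top_iff]
    calc ⊤ = wordSpan K A k * wordSpan K A 1 := hA.symm.trans (wordSpan_add A k 1)
      _ ≤ ⊤ * wordSpan K A 1 := mul_le_mul_left le_top _

lemma exists_ne_zero_of_wordSpan_eq_top [Nontrivial R] {A : ι → R} {L : ℕ} (hL : 1 ≤ L)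
    (hA : wordSpan K A L = ⊤) : ∃ i, A i ≠ 0 := by
  by_contra! h
  obtain ⟨k, rfl⟩ := Nat.exists_eq_add_of_le' hL
  have h1 : wordSpan K A 1 = ⊥ :=
    span_eq_bot.2 <| by rintro _ ⟨w, rfl⟩; simp [h]
  rw [wordSpan_add, h1, mul_bot] at hA
  exact bot_ne_top hA

lemma wordProd_eq_smul_conj {A B : ι → R} {Z W : R} {c : K} (hZW : Z * W = 1) (hWZ : W * Z = 1)
    (hB : ∀ i, B i = c • (W * A i * Z)) {m : ℕ} (w : Fin m → ι) :
    wordProd B w = c ^ m • (W * wordProd A w * Z) := by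
  induction m with
  | zero => simp [hWZ]
  | succ m ih =>
    rw [← Fin.cons_self_tail w, wordProd_cons, wordProd_cons, hB, ih, smul_mul_smul_comm,
      ← pow_succ']
    congr 1
    simp only [mul_assoc]
    rw [← mul_assoc Z W, hZW, one_mul]

variable {A : ι → R} {B : ι → S} {a b m : ℕ}

lemma transfer_comp_eq_id (hA : wordSpan K A m = ⊤) {θ : R →ₗ[K] S} {θ' : S →ₗ[K] R}
    (hθ : ∀ w : Fin m → ι, θ (wordProd A w) = wordProd B w)
    (hθ' : ∀ w : Fin m → ι, θ' (wordProd B w) = wordProd A w) : θ' ∘ₗ θ = LinearMap.id :=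
  LinearMap.ext_on_range hA fun w => by simp [hθ, hθ']

lemma transfer_wordProd_mul (hA : wordSpan K A b = ⊤) {θb θ : R →ₗ[K] S}
    (hθb : ∀ w : Fin b → ι, θb (wordProd A w) = wordProd B w)
    (hθ : ∀ w : Fin (a + b) → ι, θ (wordProd A w) = wordProd B w) (u : Fin a → ι) (Y : R) :
    θ (wordProd A u * Y) = wordProd B u * θb Y := by
  have : θ ∘ₗ LinearMap.mulLeft K (wordProd A u) = LinearMap.mulLeft K (wordProd B u) ∘ₗ θb :=
    LinearMap.ext_on_range hA fun v => by simp [← wordProd_append, hθ, hθb]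
  exact LinearMap.congr_fun this Y

lemma transfer_mul_wordProd (hA : wordSpan K A a = ⊤) {θa θ : R →ₗ[K] S}
    (hθa : ∀ w : Fin a → ι, θa (wordProd A w) = wordProd B w)
    (hθ : ∀ w : Fin (a + b) → ι, θ (wordProd A w) = wordProd B w) (X : R) (v : Fin b → ι) :
    θ (X * wordProd A v) = θa X * wordProd B v := by
  have : θ ∘ₗ LinearMap.mulRight K (wordProd A v) = LinearMap.mulRight K (wordProd B v) ∘ₗ θa :=
    LinearMap.ext_on_range hA fun u => by simp [← wordProd_append, hθ, hθa]
  exact LinearMap.congr_fun this X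

lemma transfer_mul (hAa : wordSpan K A a = ⊤) (hAb : wordSpan K A b = ⊤) {θa θb θ : R →ₗ[K] S}
    (hθa : ∀ w : Fin a → ι, θa (wordProd A w) = wordProd B w)
    (hθb : ∀ w : Fin b → ι, θb (wordProd A w) = wordProd B w)
    (hθ : ∀ w : Fin (a + b) → ι, θ (wordProd A w) = wordProd B w) (X Y : R) :
    θ (X * Y) = θa X * θb Y := by
  have : θ ∘ₗ LinearMap.mulRight K Y = LinearMap.mulRight K (θb Y) ∘ₗ θa :=
    LinearMap.ext_on_range hAa fun u => by
      simp [transfer_wordProd_mul hAb hθb hθ, hθa]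
  exact LinearMap.congr_fun this X

lemma mul_transfer_eq_transfer_mul {L : ℕ} (hA : wordSpan K A L = ⊤) {φ θ : R →ₗ[K] S}
    (hφ : ∀ w : Fin L → ι, φ (wordProd A w) = wordProd B w)
    (hθ : ∀ w : Fin (L + 1) → ι, θ (wordProd A w) = wordProd B w) (i j : ι) (Y : R) :
    B i * φ (Y * A j) = φ (A i * Y) * B j := by
  have hθ' : ∀ w : Fin (1 + L) → ι, θ (wordProd A w) = wordProd B w := add_comm L 1 ▸ hθ
  have hl := transfer_wordProd_mul hA hφ hθ' (fun _ => i) (Y * A j)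
  have hr := transfer_mul_wordProd hA hφ hθ (A i * Y) (fun _ => j)
  simp only [wordProd_fin_one] at hl hr
  rw [← hl, ← hr, mul_assoc]

end Algebra

section TransferMaps

variable {K : Type*} [Field K] {n n' : Type*} [Fintype n] [DecidableEq n]
  [Fintype n'] [DecidableEq n'] {A : ι → Matrix n n K} {B : ι → Matrix n' n' K} {N : ℕ}

lemma trace_wordProd_mul_eq (hst : ∀ w : Fin N → ι, (wordProd A w).trace = (wordProd B w).trace)
    {a b : ℕ} (h : a + b = N) (u : Fin a → ι) (v : Fin b → ι) :
    (wordProd A u * wordProd A v).trace = (wordProd B u * wordProd B v).trace := by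
  subst h
  simpa only [wordProd_append] using hst (Fin.append u v)

variable [Fintype ι]

lemma exists_transfer (hst : ∀ w : Fin N → ι, (wordProd A w).trace = (wordProd B w).trace)
    {a m : ℕ} (h : a + m = N) (hA : wordSpan K A m = ⊤) (hB : wordSpan K B a = ⊤) :
    ∃ θ : Matrix n n K →ₗ[K] Matrix n' n' K, ∀ w : Fin m → ι, θ (wordProd A w) = wordProd B w := by
  refine exists_linearMap_apply_eq _ hA fun c hc => eq_zero_of_forall_trace_mul_eq_zero hB
    fun u => ?_
  calc (wordProd B u * ∑ w, c w • wordProd B w).trace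
      = ∑ w, c w * (wordProd B u * wordProd B w).trace := by
        simp [Matrix.mul_sum, trace_sum]
    _ = ∑ w, c w * (wordProd A u * wordProd A w).trace := by
        simp only [trace_wordProd_mul_eq hst h]
    _ = (wordProd A u * ∑ w, c w • wordProd A w).trace := by
        simp [Matrix.mul_sum, trace_sum]
    _ = 0 := by rw [hc, Matrix.mul_zero, trace_zero]

lemma exists_transferEquiv {L : ℕ} (hL : 1 ≤ L) (hA : wordSpan K A L = ⊤)
    (hB : wordSpan K B L = ⊤) (hN : 2 * L ≤ N)
    (hst : ∀ w : Fin N → ι, (wordProd A w).trace = (wordProd B w).trace) :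
    ∃ φ : Matrix n n K ≃ₗ[K] Matrix n' n' K, ∀ w : Fin L → ι, φ (wordProd A w) = wordProd B w := by
  have hNL : N - L + L = N := by omega
  obtain ⟨φ, hφ⟩ := exists_transfer hst hNL hA (wordSpan_eq_top_of_le hL hB (by omega))
  obtain ⟨φ', hφ'⟩ := exists_transfer (fun w => (hst w).symm) hNL hB
    (wordSpan_eq_top_of_le hL hA (by omega))
  exact ⟨.ofLinearMap φ φ' (transfer_comp_eq_id hB hφ' hφ) (transfer_comp_eq_id hA hφ hφ'), hφ⟩

end TransferMaps

section Gauge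

variable {K : Type*} [Field K] {n : Type*} [Fintype n] [DecidableEq n] [Nonempty n]
  {A B : ι → Matrix n n K}

lemma exists_smul_algEquiv_of_map_mul (φ : Matrix n n K ≃ₗ[K] Matrix n n K)
    (θ : Matrix n n K →ₗ[K] Matrix n n K) (h : ∀ X Y, θ (X * Y) = φ X * φ Y) :
    ∃ μ : K, μ ≠ 0 ∧ ∃ ψ : Matrix n n K ≃ₐ[K] Matrix n n K, ∀ X, φ X = μ • ψ X := by
  obtain ⟨μ, hμ⟩ := exists_eq_smul_one_of_forall_commute (M := φ 1) fun M => by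
    obtain ⟨Y, rfl⟩ := φ.surjective M
    rw [Commute, SemiconjBy, ← h, ← h, mul_one, one_mul]
  have hθ : ∀ X, θ X = μ • φ X := fun X => by simpa [hμ] using h X 1
  have hmul : ∀ X Y, μ • φ (X * Y) = φ X * φ Y := fun X Y => by rw [← h, hθ]
  have hμ0 : μ ≠ 0 := by
    rintro rfl
    rw [zero_smul, φ.map_eq_zero_iff] at hμ
    exact one_ne_zero hμ
  let ψ : Matrix n n K ≃ₐ[K] Matrix n n K :=
    .ofLinearEquiv (φ.trans (.smulOfNeZero K _ μ⁻¹ (inv_ne_zero hμ0)))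
      (by simp [hμ, smul_smul, mul_inv_cancel₀ hμ0])
      (fun X Y => by
        simp only [LinearEquiv.trans_apply, LinearEquiv.smulOfNeZero_apply]
        rw [smul_mul_smul_comm, ← hmul, smul_smul, inv_mul_cancel_right₀ hμ0])
  exact ⟨μ, hμ0, ψ, fun X => by simp [ψ, smul_smul, mul_inv_cancel₀ hμ0]⟩

lemma pow_eq_one_of_eq_smul_conj (hA : wordSpan K A N = ⊤)
    (hst : ∀ w : Fin N → ι, (wordProd A w).trace = (wordProd B w).trace) {Z W : Matrix n n K}
    (hZW : Z * W = 1) (hWZ : W * Z = 1) {c : K} (hB : ∀ i, B i = c • (W * A i * Z)) :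
    c ^ N = 1 := by
  obtain ⟨w, hw⟩ : ∃ w : Fin N → ι, (wordProd A w).trace ≠ 0 := by
    by_contra! h
    exact one_ne_zero (eq_zero_of_forall_trace_mul_eq_zero hA fun w => by simpa using h w)
  have := hst w
  rw [wordProd_eq_smul_conj hZW hWZ hB, trace_smul, trace_mul_cycle, hZW, one_mul,
    smul_eq_mul] at this
  exact mul_right_cancel₀ hw (by rw [one_mul]; exact this.symm)

lemma exists_eq_smul_one_of_forall_eq_smul_conj {L : ℕ} (hA : wordSpan K A L = ⊤)
    {Z W : Matrix n n K} (hZW : Z * W = 1) (hWZ : W * Z = 1) {c : K}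
    (h : ∀ i, A i = c • (W * A i * Z)) : ∃ γ : K, Z = γ • 1 := by
  have hconj : LinearMap.id = c ^ L • (LinearMap.mulLeft K W ∘ₗ LinearMap.mulRight K Z) :=
    LinearMap.ext_on_range hA fun w => by simpa [mul_assoc] using wordProd_eq_smul_conj hZW hWZ h w
  have hX : ∀ X, X = c ^ L • (W * X * Z) := fun X => by
    simpa [mul_assoc] using LinearMap.congr_fun hconj X
  have hcL : c ^ L = 1 := by
    obtain ⟨i⟩ := ‹Nonempty n›
    simpa [hWZ] using (congr_fun₂ (hX 1) i i).symm
  refine exists_eq_smul_one_of_forall_commute fun X => ?_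
  have hXZ : X = W * X * Z := by simpa [hcL] using hX X
  calc X * Z = Z * W * X * Z := by rw [hZW, one_mul]
    _ = Z * (W * X * Z) := by simp only [mul_assoc]
    _ = Z * X := by rw [← hXZ]

lemma exists_eq_smul_of_smul_conj_eq {L : ℕ} (hA : wordSpan K A L = ⊤)
    {Z W Z' W' : Matrix n n K} (hZW : Z * W = 1) (hWZ : W * Z = 1) (hZW' : Z' * W' = 1)
    (hWZ' : W' * Z' = 1) {c c' : K} (hc : c ≠ 0)
    (h : ∀ i, c • (W * A i * Z) = c' • (W' * A i * Z')) : ∃ γ : K, γ ≠ 0 ∧ Z' = γ • Z := by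
  have hA' : ∀ i, A i = (c' / c) • ((Z * W') * A i * (Z' * W)) := fun i => by
    have := congrArg (fun M => Z * M * W) (h i)
    simp only [mul_smul_comm, smul_mul_assoc, ← mul_assoc, hZW, one_mul] at this
    rw [mul_assoc (A i), hZW, mul_one] at this
    rw [div_eq_inv_mul, mul_smul, ← mul_assoc _ Z', ← this, smul_smul, inv_mul_cancel₀ hc, one_smul]
  obtain ⟨γ, hγ⟩ := exists_eq_smul_one_of_forall_eq_smul_conj hA (Z := Z' * W) (W := Z * W')
    (by rw [mul_assoc, ← mul_assoc W, hWZ, one_mul, hZW'])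
    (by rw [mul_assoc, ← mul_assoc W', hWZ', one_mul, hZW]) hA'
  have hZ' : Z' = γ • Z := by rw [← mul_one Z', ← hWZ, ← mul_assoc, hγ, smul_one_mul]
  refine ⟨γ, fun hγ0 => ?_, hZ'⟩
  rw [hZ', hγ0, zero_smul, zero_mul] at hZW'
  exact zero_ne_one hZW'

variable [Fintype ι]

theorem exists_eq_smul_conj_of_transfer {L N : ℕ} (hL : 1 ≤ L) (hA : wordSpan K A L = ⊤)
    (hB : wordSpan K B L = ⊤) (hN : 3 * L ≤ N)
    (hst : ∀ w : Fin N → ι, (wordProd A w).trace = (wordProd B w).trace)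
    (φ : Matrix n n K ≃ₗ[K] Matrix n n K) (hφ : ∀ w : Fin L → ι, φ (wordProd A w) = wordProd B w) :
    ∃ (U : (Matrix n n K)ˣ) (c : K), ∀ i, B i = c • (U * A i * U⁻¹) := by
  obtain ⟨θ₂, hθ₂⟩ := exists_transfer (a := N - (L + L)) (m := L + L) hst (by omega)
    (wordSpan_eq_top_of_le hL hA (by omega)) (wordSpan_eq_top_of_le hL hB (by omega))
  obtain ⟨μ, hμ, ψ, hφψ⟩ := exists_smul_algEquiv_of_map_mul φ θ₂
    (transfer_mul hA hA (θa := φ.toLinearMap) (θb := φ.toLinearMap) hφ hφ hθ₂)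
  obtain ⟨θ₁, hθ₁⟩ := exists_transfer (a := N - (L + 1)) (m := L + 1) hst (by omega)
    (wordSpan_eq_top_of_le hL hA (by omega)) (wordSpan_eq_top_of_le hL hB (by omega))
  have hcomm : ∀ i j M, ψ (A i) * M * B j = B i * M * ψ (A j) := by
    intro i j M
    obtain ⟨Y, rfl⟩ := ψ.surjective M
    have h := mul_transfer_eq_transfer_mul hA (φ := φ.toLinearMap) hφ hθ₁ i j Y
    rw [LinearEquiv.coe_coe, hφψ, hφψ, mul_smul_comm, smul_mul_assoc, map_mul, map_mul,
      ← mul_assoc] at h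
    exact (smul_right_injective _ hμ h).symm
  obtain ⟨i₀, hi₀⟩ := exists_ne_zero_of_wordSpan_eq_top hL hA
  obtain ⟨c, hc⟩ := exists_eq_smul_of_mul_mul_eq hcomm (i₀ := i₀) (by simpa using hi₀)
  obtain ⟨U, hU⟩ := exists_units_algEquiv_apply_eq ψ
  exact ⟨U, c, fun i => by rw [hc, hU]⟩

end Gauge

end MPS

open MPS

/-- Fundamental theorem for translationally invariant normal MPS on
`n ≥ 3L` sites, where blocking `L` consecutive sites yields an injective tensor. -/
theorem fundamental_theorem_TI_normal_MPS (n L d D D' : ℕ) (hL : 1 ≤ L) (hn : 3 * L ≤ n)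
    (A : Fin d → Matrix (Fin D) (Fin D) ℂ) (B : Fin d → Matrix (Fin D') (Fin D') ℂ)
    (hA : Function.Injective fun X : Matrix (Fin D) (Fin D) ℂ =>
      fun i : Fin L → Fin d => (((List.ofFn fun k => A (i k)).prod) * Xᵀ).trace)
    (hB : Function.Injective fun X : Matrix (Fin D') (Fin D') ℂ =>
      fun i : Fin L → Fin d => (((List.ofFn fun k => B (i k)).prod) * Xᵀ).trace)
    (hstate : ∀ i : Fin n → Fin d,
      ((List.ofFn fun k => A (i k)).prod).trace = ((List.ofFn fun k => B (i k)).prod).trace) :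
    D = D' ∧
    ∃ (Z : Matrix (Fin D) (Fin D') ℂ) (W : Matrix (Fin D') (Fin D) ℂ) (lam : ℂ),
      Z * W = 1 ∧ W * Z = 1 ∧ lam ^ n = 1 ∧
      (∀ i, B i = lam • (W * A i * Z)) ∧
      ∀ (Z' : Matrix (Fin D) (Fin D') ℂ) (W' : Matrix (Fin D') (Fin D) ℂ) (lam' : ℂ),
        Z' * W' = 1 → W' * Z' = 1 → lam' ^ n = 1 →
        (∀ i, B i = lam' • (W' * A i * Z')) →
        ∃ c : ℂ, c ≠ 0 ∧ Z' = c • Z := by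
  have hA' : wordSpan ℂ A L = ⊤ := span_eq_top_of_injective_trace_mul_transpose hA
  have hB' : wordSpan ℂ B L = ⊤ := span_eq_top_of_injective_trace_mul_transpose hB
  obtain ⟨φ, hφ⟩ := exists_transferEquiv hL hA' hB' (by omega) hstate
  obtain rfl : D = D' := by simpa using card_eq_of_linearEquiv φ
  rcases isEmpty_or_nonempty (Fin D) with hD | hD
  · exact ⟨rfl, 0, 0, 1, Subsingleton.elim _ _, Subsingleton.elim _ _, one_pow n,
      fun _ => Subsingleton.elim _ _, fun _ _ _ _ _ _ _ => ⟨1, one_ne_zero, Subsingleton.elim _ _⟩⟩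
  obtain ⟨U, c, hc⟩ := exists_eq_smul_conj_of_transfer hL hA' hB' hn hstate φ hφ
  have hcn : c ^ n = 1 :=
    pow_eq_one_of_eq_smul_conj (wordSpan_eq_top_of_le hL hA' (by omega)) hstate U.inv_mul
      U.mul_inv hc
  refine ⟨rfl, ↑U⁻¹, U, c, U.inv_mul, U.mul_inv, hcn, hc, fun Z' W' c' hZW' hWZ' _ hc' => ?_⟩
  exact exists_eq_smul_of_smul_conj_eq hA' U.inv_mul U.mul_inv hZW' hWZ'
    (ne_zero_pow (by omega) (hcn ▸ one_ne_zero)) fun i => (hc i).symm.trans (hc' i)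
end
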